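/- arXiv:2006.02654 — 11 statements merged into one kernel-verified Lean document; each statement's English description precedes it below -/
import Mathlib

section
/- Let F be a field of characteristic zero, let A be a unital algebraic (not necessarily associative) F-algebra, and let λ ∈ F. If R : A → A is a Rota–Baxter operator of weight λ, then there exist natural numbers k, l such that R^k ∘ (R + λ·id)^l = 0 as a linear operator on A; in particular, the spectrum of R (as an F-linear endomorphism of A) is contained in {0, −λ}. -/
open Polynomial

/-- Jacobson-style lemma: if `[P,Q] = Q² + λQ` on a finite-dimensional space over a
characteristic-zero field, then `Q² + λQ` is nilpotent.  Proved by iterating the derivation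
identity `[P, q(Q)] = q'(Q)·(Q²+λQ)` starting from the characteristic polynomial. -/
theorem rb_aux_nilp {F V : Type*} [Field F] [CharZero F] [AddCommGroup V] [Module F V]
    [FiniteDimensional F V] (lam : F) (P Q : Module.End F V)
    (hc : P * Q - Q * P = Q * Q + lam • Q) :
    ∃ m : ℕ, 1 ≤ m ∧ (Q * Q + lam • Q) ^ m = 0 := by
  set h : F[X] := X ^ 2 + C lam * X with hh
  have hT : aeval Q h = Q * Q + lam • Q := by
    simp [hh, sq, Algebra.smul_def, Algebra.commutes]
  have L2 : ∀ q : F[X], P * aeval Q q - aeval Q q * P = aeval Q (derivative q * h) := by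
    intro q
    induction q using Polynomial.induction_on with
    | C a => simp [Algebra.commutes]
    | add p q hp hq =>
        rw [derivative_add, add_mul, map_add, map_add, ← hp, ← hq]; noncomm_ring
    | monomial n a ih =>
        have e1 : (C a * X ^ (n+1)) = (C a * X ^ n) * X := by ring
        have e2 : derivative (C a * X ^ n * X) * h
            = derivative (C a * X ^ n) * h * X + (C a * X ^ n) * h := by
          rw [derivative_mul, derivative_X]; ring
        rw [e1, map_mul (aeval Q) (C a * X ^ n) X, aeval_X]
        rw [show P * (aeval Q (C a * X ^ n) * Q) - aeval Q (C a * X ^ n) * Q * P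
            = (P * aeval Q (C a * X ^ n) - aeval Q (C a * X ^ n) * P) * Q
              + aeval Q (C a * X ^ n) * (P * Q - Q * P) from by noncomm_ring]
        rw [ih, hc, ← hT, e2,
          map_add (aeval Q) (derivative (C a * X ^ n) * h * X) (C a * X ^ n * h),
          map_mul (aeval Q) (derivative (C a * X ^ n) * h) X,
          aeval_X, map_mul (aeval Q) (C a * X ^ n) h]
  set p : F[X] := LinearMap.charpoly Q with hp
  have e5 : ∀ k : ℕ, derivative (h ^ k) * h = C (k : F) * derivative h * h ^ k := by
    intro k
    cases k with
    | zero => simp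
    | succ k' =>
        rw [derivative_pow, Nat.add_sub_cancel, pow_succ]
        push_cast
        ring
  have key : ∀ j : ℕ, aeval Q (derivative^[j] p * h ^ j) = 0 := by
    intro j
    induction j with
    | zero => simpa using LinearMap.aeval_self_charpoly Q
    | succ k ih =>
        have h0 := L2 (derivative^[k] p * h ^ k)
        rw [ih] at h0
        simp only [mul_zero, zero_mul, sub_zero] at h0
        have e3 : derivative (derivative^[k] p * h ^ k) * h
            = derivative^[k+1] p * h ^ (k+1)
              + (C (k : F) * derivative h) * (derivative^[k] p * h ^ k) := by
          rw [derivative_mul, add_mul, mul_assoc (derivative^[k] p), e5 k,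
            ← Function.iterate_succ_apply' derivative, mul_assoc, ← pow_succ]
          ring
        rw [e3, map_add, map_mul (aeval Q) (C (k : F) * derivative h)
          (derivative^[k] p * h ^ k), ih, mul_zero, add_zero] at h0
        exact h0.symm
  set n := p.natDegree with hn
  have hmonic : p.Monic := LinearMap.charpoly_monic Q
  have hdn : derivative^[n] p = C ((n.factorial : F)) := by
    have hXn : derivative^[n] (X ^ n : F[X]) = C ((n.factorial : F)) := by
      rw [iterate_derivative_X_pow_eq_smul, Nat.descFactorial_self, Nat.sub_self, pow_zero]
      simp [smul_eq_C_mul, nsmul_eq_mul, Polynomial.C_eq_natCast]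
    have hsplit : derivative^[n] p
        = derivative^[n] (p - X ^ n) + derivative^[n] (X ^ n) := by
      rw [iterate_derivative_sub]; ring
    by_cases hz : p - X ^ n = 0
    · rw [hsplit, hz, iterate_derivative_zero, zero_add, hXn]
    · have hdlt : (p - X ^ n).degree < p.degree :=
        degree_sub_lt (by rw [degree_X_pow, degree_eq_natDegree hmonic.ne_zero]) hmonic.ne_zero
          (by rw [hmonic.leadingCoeff, (monic_X_pow n).leadingCoeff])
      have hdeg : (p - X ^ n).natDegree < n := by
        rw [degree_eq_natDegree hmonic.ne_zero] at hdlt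
        exact (natDegree_lt_iff_degree_lt hz).mpr hdlt
      rw [hsplit, iterate_derivative_eq_zero hdeg, zero_add, hXn]
  have hfin := key n
  rw [hdn, map_mul, aeval_C, ← Algebra.smul_def, map_pow, hT] at hfin
  have hcne : ((n.factorial : F)) ≠ 0 := Nat.cast_ne_zero.mpr n.factorial_ne_zero
  have hTn := (smul_eq_zero.mp hfin).resolve_left hcne
  exact ⟨n + 1, by omega, by rw [pow_succ, hTn, zero_mul]⟩

/-- For a unital algebraic (not necessarily associative) algebra `A` over a
field `F` of characteristic zero and a Rota–Baxter operator `R` of weight `lam` on `A`,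
there are `k, l` with `R^k ∘ (R + lam • id)^l = 0`; in particular `Spec(R) ⊆ {0, -lam}`. -/
theorem rb_spectrum_char_zero
    {F : Type*} [Field F] [CharZero F]
    {A : Type*} [NonAssocRing A] [Module F A] [SMulCommClass F A A] [IsScalarTower F A A]
    (halg : ∀ s : Finset A,
      FiniteDimensional F (NonUnitalAlgebra.adjoin F (↑s : Set A)))
    (lam : F) (R : A →ₗ[F] A)
    (hR : ∀ x y : A, R x * R y = R (R x * y + x * R y + lam • (x * y))) :
    (∃ k l : ℕ, R ^ k * (R + lam • LinearMap.id) ^ l = 0) ∧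
      spectrum F (R : Module.End F A) ⊆ {0, -lam} := by
  classical
  obtain ⟨k, hk1, hkl⟩ : ∃ k : ℕ, 1 ≤ k ∧ R ^ k * (R + lam • LinearMap.id) ^ k = 0 := by
    set r : A := R 1 with hr
    have hRx1 : ∀ x : A, R x * r = R (R x) + R (x * r) + lam • R x := by
      intro x
      have h := hR x 1
      simpa [mul_one, map_add, map_smul] using h
    set u : ℕ → A := fun n => (R ^ n) 1 with hu
    have hu0 : u 0 = 1 := rfl
    have huS : ∀ n, u (n + 1) = R (u n) := by
      intro n
      show (R ^ (n+1)) 1 = R ((R ^ n) 1)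
      rw [pow_succ']
      rfl
    have hur : ∀ n, u n * r = ((n : F) + 1) • u (n + 1) + ((n : F) * lam) • u n := by
      intro n
      induction n with
      | zero => simp [hu0, huS 0, one_mul, hr]
      | succ n ih =>
          rw [huS n, hRx1 (u n), ih, map_add, map_smul, map_smul, ← huS n, ← huS (n+1)]
          push_cast
          module
    -- the finite-dimensional ambient space U
    set B := NonUnitalAlgebra.adjoin F ({r} : Set A) with hB
    have hBfin : FiniteDimensional F B := by
      have h := halg {r}
      rw [Finset.coe_singleton] at h
      exact h
    set U : Submodule F A := (Submodule.span F {(1 : A)}) ⊔ B.toSubmodule with hU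
    have hUfin : FiniteDimensional F U := by
      haveI : FiniteDimensional F (Submodule.span F {(1 : A)}) :=
        FiniteDimensional.span_of_finite F (Set.finite_singleton 1)
      haveI : FiniteDimensional F B.toSubmodule := hBfin
      exact Submodule.finiteDimensional_sup _ _
    have hrB : r ∈ B := NonUnitalAlgebra.subset_adjoin F rfl
    have hUr : ∀ x ∈ U, x * r ∈ U := by
      intro x hx
      rw [hU, Submodule.mem_sup] at hx
      obtain ⟨y, hy, z, hz, rfl⟩ := hx
      obtain ⟨a, rfl⟩ := Submodule.mem_span_singleton.mp hy
      have h1 : (a • (1:A) + z) * r = a • r + z * r := by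
        rw [add_mul, smul_mul_assoc, one_mul]
      rw [h1]
      have hzB : z ∈ B := hz
      have : a • r + z * r ∈ B.toSubmodule :=
        add_mem (Submodule.smul_mem _ a hrB) (B.mul_mem hzB hrB)
      exact Submodule.mem_sup_right this
    have huU : ∀ n, u n ∈ U := by
      intro n
      induction n with
      | zero =>
          exact Submodule.mem_sup_left (Submodule.subset_span rfl)
      | succ n ih =>
          have hne : ((n : F) + 1) ≠ 0 := Nat.cast_add_one_ne_zero n
          have h2 : ((n : F) + 1) • u (n + 1) = u n * r - ((n : F) * lam) • u n := by
            rw [hur n]; abel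
          have h3 : u (n + 1) = ((n : F) + 1)⁻¹ • (u n * r - ((n : F) * lam) • u n) := by
            rw [← h2, smul_smul, inv_mul_cancel₀ hne, one_smul]
          rw [h3]
          exact Submodule.smul_mem _ _ (sub_mem (hUr _ ih) (Submodule.smul_mem _ _ ih))
    set W : Submodule F A := Submodule.span F (Set.range u) with hW
    have hWU : W ≤ U := Submodule.span_le.mpr (by rintro x ⟨n, rfl⟩; exact huU n)
    haveI hWfin : FiniteDimensional F W := Submodule.finiteDimensional_of_le hWU
    have huW : ∀ n, u n ∈ W := fun n => Submodule.subset_span ⟨n, rfl⟩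
    have hRW : ∀ x ∈ W, R x ∈ W := by
      intro x hx
      induction hx using Submodule.span_induction with
      | mem x hx => obtain ⟨n, rfl⟩ := hx; rw [← huS n]; exact huW (n+1)
      | zero => simpa using Submodule.zero_mem W
      | add x y _ _ hx hy => rw [map_add]; exact add_mem hx hy
      | smul a x _ hx => rw [map_smul]; exact Submodule.smul_mem _ _ hx
    have hMW : ∀ x ∈ W, (LinearMap.mulRight F r) x ∈ W := by
      intro x hx
      induction hx using Submodule.span_induction with
      | mem x hx =>
          obtain ⟨n, rfl⟩ := hx
          show u n * r ∈ W
          rw [hur n]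
          exact add_mem (Submodule.smul_mem _ _ (huW (n+1))) (Submodule.smul_mem _ _ (huW n))
      | zero => show (0:A) * r ∈ W; rw [zero_mul]; exact Submodule.zero_mem W
      | add x y _ _ hx hy => show (x + y) * r ∈ W; rw [add_mul]; exact add_mem hx hy
      | smul a x _ hx =>
          show (a • x) * r ∈ W; rw [smul_mul_assoc]; exact Submodule.smul_mem _ _ hx
    -- restrict
    set R' : Module.End F W := R.restrict hRW with hR'
    set P' : Module.End F W := (LinearMap.mulRight F r).restrict hMW with hP'
    have hcomm : P' * R' - R' * P' = R' * R' + lam • R' := by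
      apply LinearMap.ext
      rintro ⟨x, hx⟩
      apply Subtype.ext
      simp only [LinearMap.sub_apply, LinearMap.add_apply, LinearMap.smul_apply,
        Module.End.mul_apply, LinearMap.restrict_apply, hR', hP']
      show R x * r - R (x * r) = R (R x) + lam • R x
      rw [hRx1 x]; abel
    obtain ⟨m, hm1, hmz⟩ := rb_aux_nilp lam P' R' hcomm
    -- transfer back
    set T : Module.End F A := R * R + lam • R with hT
    have hTW : ∀ x ∈ W, T x ∈ W := by
      intro x hx
      show R (R x) + lam • R x ∈ W
      exact add_mem (hRW _ (hRW _ hx)) (Submodule.smul_mem _ _ (hRW _ hx))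
    have hrestr : T.restrict hTW = R' * R' + lam • R' := by
      apply LinearMap.ext
      rintro ⟨x, hx⟩
      apply Subtype.ext
      rfl
    have h1W : (1 : A) ∈ W := hu0 ▸ huW 0
    have hTm : (T ^ m) 1 = 0 := by
      have hres : (T.restrict hTW) ^ m = 0 := by rw [hrestr]; exact hmz
      rw [Module.End.pow_restrict m hTW] at hres
      have h2 := congrArg Subtype.val (LinearMap.ext_iff.mp hres ⟨1, h1W⟩)
      simpa [LinearMap.restrict_apply] using h2
    have hSR : (R + lam • LinearMap.id : Module.End F A) * R = T := by
      have hid : (LinearMap.id : A →ₗ[F] A) = (1 : Module.End F A) := rfl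
      rw [hT, add_mul, hid, smul_mul_assoc, one_mul]
    have hcSR : Commute (R + lam • LinearMap.id : Module.End F A) R := by
      show _ * _ = _ * _
      have hid : (LinearMap.id : A →ₗ[F] A) = (1 : Module.End F A) := rfl
      rw [add_mul, mul_add, hid, smul_mul_assoc, one_mul, mul_smul_comm, mul_one]
    have hSRpow : (R + lam • LinearMap.id : Module.End F A) ^ m * R ^ m = T ^ m := by
      rw [← hcSR.mul_pow, hSR]
    have hTm1 : (((R + lam • LinearMap.id : Module.End F A) ^ m) * R ^ m) 1 = 0 := by
      rw [hSRpow]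
      exact hTm
    set S : Module.End F A := R + lam • LinearMap.id with hS
    have hid : (LinearMap.id : A →ₗ[F] A) = (1 : Module.End F A) := rfl
    have hSapp : ∀ x : A, S x = R x + lam • x := fun x => rfl
    have hRS : R * S = S * R := by
      rw [hS, hid, mul_add, add_mul, mul_smul_comm, smul_mul_assoc, mul_one, one_mul]
    set ML : A → Module.End F A := fun x => LinearMap.mulLeft F x with hML
    have hML1 : ML (1 : A) = 1 := by
      apply LinearMap.ext; intro y; exact one_mul y
    have hML0 : ML (0 : A) = 0 := by
      apply LinearMap.ext; intro y; exact zero_mul y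
    set DR : Module.End F A → Module.End F A := fun Z => Z * R - R * Z with hDR
    set DS : Module.End F A → Module.End F A := fun Z => Z * S - S * Z with hDS
    have hDR0 : ∀ n, DR^[n] 0 = 0 := by
      intro n; induction n with
      | zero => rfl
      | succ n ih => rw [Function.iterate_succ_apply, show DR 0 = 0 by simp [hDR], ih]
    have hDS0 : ∀ n, DS^[n] 0 = 0 := by
      intro n; induction n with
      | zero => rfl
      | succ n ih => rw [Function.iterate_succ_apply, show DS 0 = 0 by simp [hDS], ih]
    -- base identities
    have KA : ∀ x : A, R * ML x * S = DR (ML (R x)) := by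
      intro x
      apply LinearMap.ext; intro y
      show R (x * S y) = R x * (R y) - R (R x * y)
      rw [hSapp y, mul_add, mul_smul_comm, map_add, map_smul, hR x y, map_add, map_add, map_smul]
      abel
    have hSRB : ∀ x y : A, S x * S y = S (R x * y + x * R y + lam • (x * y)) := by
      intro x y
      rw [hSapp x, hSapp y, hSapp (R x * y + x * R y + lam • (x * y))]
      rw [add_mul, mul_add, mul_add, mul_smul_comm lam (R x) y, smul_mul_assoc lam x (R y),
        smul_mul_assoc lam x (lam • y), mul_smul_comm lam x y, hR x y, smul_add, smul_add]
      module
    have KB : ∀ x : A, S * ML x * R = DS (ML (S x)) := by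
      intro x
      apply LinearMap.ext; intro y
      show S (x * R y) = S x * (S y) - S (S x * y)
      rw [hSRB x y]
      have hSxy : S x * y = R x * y + lam • (x * y) := by
        rw [hSapp x, add_mul, smul_mul_assoc]
      rw [hSxy, ← map_sub S]
      congr 1
      abel
    -- conjugation commutes with the iterated difference operators
    have CC1 : ∀ Z : Module.End F A, R * DR Z * S = DR (R * Z * S) := by
      intro Z
      show R * (Z * R - R * Z) * S = (R * Z * S) * R - R * (R * Z * S)
      rw [mul_sub, sub_mul]
      rw [show R * (Z * R) * S = R * Z * (R * S) by noncomm_ring, hRS]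
      noncomm_ring
    have CC2 : ∀ Z : Module.End F A, S * DR Z * R = DR (S * Z * R) := by
      intro Z
      show S * (Z * R - R * Z) * R = (S * Z * R) * R - R * (S * Z * R)
      rw [mul_sub, sub_mul]
      rw [show S * (R * Z) * R = (S * R) * (Z * R) by noncomm_ring, ← hRS]
      noncomm_ring
    have CC3 : ∀ Z : Module.End F A, S * DS Z * R = DS (S * Z * R) := by
      intro Z
      show S * (Z * S - S * Z) * R = (S * Z * R) * S - S * (S * Z * R)
      rw [mul_sub, sub_mul]
      rw [show S * (Z * S) * R = S * Z * (S * R) by noncomm_ring, ← hRS]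
      noncomm_ring
    have CC1n : ∀ (n : ℕ) (Z : Module.End F A), R * DR^[n] Z * S = DR^[n] (R * Z * S) := by
      intro n
      induction n with
      | zero => intro Z; rfl
      | succ n ih =>
          intro Z
          rw [Function.iterate_succ_apply', Function.iterate_succ_apply', CC1, ih]
    have CC3n : ∀ (n : ℕ) (Z : Module.End F A), S * DS^[n] Z * R = DS^[n] (S * Z * R) := by
      intro n
      induction n with
      | zero => intro Z; rfl
      | succ n ih =>
          intro Z
          rw [Function.iterate_succ_apply', Function.iterate_succ_apply', CC3, ih]
    have CC2n : ∀ (n : ℕ) (Z : Module.End F A), S * DR^[n] Z * R = DR^[n] (S * Z * R) := by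
      intro n
      induction n with
      | zero => intro Z; rfl
      | succ n ih =>
          intro Z
          rw [Function.iterate_succ_apply', Function.iterate_succ_apply', CC2, ih]
    have CC2nk : ∀ (k n : ℕ) (Z : Module.End F A),
        S ^ k * DR^[n] Z * R ^ k = DR^[n] (S ^ k * Z * R ^ k) := by
      intro k
      induction k with
      | zero => intro n Z; simp
      | succ k ih =>
          intro n Z
          have e1 : S ^ (k+1) * DR^[n] Z * R ^ (k+1)
              = S * (S ^ k * DR^[n] Z * R ^ k) * R := by
            rw [pow_succ' S k, pow_succ R k]; noncomm_ring
          rw [e1, ih, CC2n]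
          congr 1
          rw [pow_succ' S k, pow_succ R k]; noncomm_ring
    -- iterated sandwich identities
    have IA : ∀ (n : ℕ) (x : A), R ^ n * ML x * S ^ n = DR^[n] (ML ((R ^ n) x)) := by
      intro n
      induction n with
      | zero => intro x; simp
      | succ n ih =>
          intro x
          have e1 : R ^ (n+1) * ML x * S ^ (n+1) = R * (R ^ n * ML x * S ^ n) * S := by
            rw [pow_succ' R n, pow_succ S n]; noncomm_ring
          rw [e1, ih, CC1n, KA, ← Function.iterate_succ_apply]
          congr 2
          rw [pow_succ' R n]
          rfl
    have IB : ∀ (n : ℕ) (x : A), S ^ n * ML x * R ^ n = DS^[n] (ML ((S ^ n) x)) := by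
      intro n
      induction n with
      | zero => intro x; simp
      | succ n ih =>
          intro x
          have e1 : S ^ (n+1) * ML x * R ^ (n+1) = S * (S ^ n * ML x * R ^ n) * R := by
            rw [pow_succ' S n, pow_succ R n]; noncomm_ring
          rw [e1, ih, CC3n, KB, ← Function.iterate_succ_apply]
          congr 2
          rw [pow_succ' S n]
          rfl
    -- assembly
    have e0 : R ^ (2*m) * S ^ (2*m) = S ^ m * (R ^ m * ML 1 * S ^ m) * R ^ m := by
      rw [hML1]
      have h1 :R ^ m * (1 : Module.End F A) * S ^ m = R ^ m * S ^ m := by rw [mul_one]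
      rw [h1]
      have h3 : Commute (R ^ m) (S ^ m) := (hcSR.symm.pow_pow m m)
      have key2 : ∀ a b : Module.End F A, a * b = b * a → a * a * (b * b) = b * (a * b) * a := by
        intro a b hab
        calc a*a*(b*b) = a*(a*b)*b := by noncomm_ring
          _ = a*(b*a)*b := by rw [hab]
          _ = (a*b)*(a*b) := by noncomm_ring
          _ = (b*a)*(a*b) := by rw [hab]
          _ = b*a*(a*b) := by noncomm_ring
          _ = b*a*(b*a) := by rw [hab]
          _ = b*(a*b)*a := by noncomm_ring
      calc R ^ (2*m) * S ^ (2*m) = (R ^ m * R ^ m) * (S ^ m * S ^ m) := by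
            rw [two_mul, pow_add, pow_add]
        _ = S ^ m * (R ^ m * S ^ m) * R ^ m := key2 _ _ h3.eq
    have hfinal : R ^ (2*m) * S ^ (2*m) = 0 := by
      rw [e0, IA m 1, CC2nk m m, IB m ((R ^ m) 1)]
      have hz : (S ^ m) ((R ^ m) 1) = 0 := hTm1
      rw [hz, hML0, hDS0 m, hDR0 m]
    exact ⟨2 * m, by omega, hfinal⟩
  refine ⟨⟨k, k, hkl⟩, ?_⟩
  intro mu hmu
  by_cases htriv : Subsingleton A
  · exfalso
    haveI : Subsingleton (Module.End F A) := by
      constructor; intro f g; apply LinearMap.ext; intro x; exact Subsingleton.elim _ _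
    exact spectrum.mem_iff.mp hmu (isUnit_of_subsingleton _)
  · haveI : Nontrivial A := not_subsingleton_iff_nontrivial.mp htriv
    haveI : Nontrivial (Module.End F A) := by
      obtain ⟨x, hx⟩ := exists_ne (0 : A)
      refine nontrivial_of_ne 1 0 fun h => hx ?_
      have := LinearMap.ext_iff.mp h x
      simpa using this
    set p : F[X] := X ^ k * (X + C lam) ^ k with hp
    have hap : aeval R p = 0 := by
      rw [hp, map_mul, map_pow, map_pow, aeval_X, map_add, aeval_X, aeval_C]
      have : (algebraMap F (Module.End F A)) lam = lam • LinearMap.id := by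
        rw [Algebra.algebraMap_eq_smul_one]
        rfl
      rw [this]
      exact hkl
    have hmem : p.eval mu ∈ spectrum F (aeval R p) :=
      spectrum.subset_polynomial_aeval R p ⟨mu, hmu, rfl⟩
    rw [hap, spectrum.zero_eq] at hmem
    have : mu ^ k * (mu + lam) ^ k = 0 := by
      simpa [hp] using hmem
    rcases mul_eq_zero.mp this with h | h
    · left
      exact pow_eq_zero_iff (by omega) |>.mp h
    · right
      have : mu + lam = 0 := pow_eq_zero_iff (show k ≠ 0 by omega) |>.mp h
      simp only [Set.mem_singleton_iff]
      linear_combination this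
end

section
/- Let F be a field of positive characteristic p, let A be a finite-dimensional unital (not necessarily associative) F-algebra, and let λ ∈ F. If R : A → A is a Rota–Baxter operator of weight λ, then there exist natural numbers k, l such that R^k ∘ (R + λ·id)^l = 0 as a linear operator on A; in particular, the spectrum of R is contained in {0, −λ}. -/
/-!
Let `D X = X * R - R * X` on `Module.End F A` and let `ρ b` be right multiplication by `b`.
The Rota–Baxter identity reads `D (ρ (R b)) = R * ρ b * (R + λ)`, and `D` commutes with
`X ↦ R * X * (R + λ)`, so iterating gives `Dⁿ (ρ (Rⁿ 1)) = Rⁿ * (R + λ)ⁿ`. This operator thus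
lies in the range of `Dⁿ`; it also commutes with `R`, i.e. lies in the kernel of `D`.
By Fitting's lemma the kernel and range of `Dⁿ` on the finite-dimensional space
`Module.End F A` are disjoint for large `n`, so `Rⁿ * (R + λ)ⁿ = 0`, and the spectrum bound
follows by spectral mapping.
-/

open LinearMap Polynomial

def IsRotaBaxter {F A : Type*} [Mul A] [Add A] [SMul F A] (lam : F) (R : A → A) : Prop :=
  ∀ x y, R x * R y = R (R x * y + x * R y + lam • (x * y))

namespace IsRotaBaxter

section NonUnital

variable {F A : Type*} [CommRing F] [NonUnitalNonAssocRing A] [Module F A] [IsScalarTower F A A]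
  {lam : F} {R : A →ₗ[F] A}

theorem mulRight_map_mul_sub_mul_mulRight_map (hR : IsRotaBaxter lam R) (b : A) :
    mulRight F (R b) * R - R * mulRight F (R b) = R * mulRight F b * (R + lam • 1) := by
  ext x
  simp only [Module.End.mul_apply, LinearMap.sub_apply, LinearMap.add_apply,
    LinearMap.smul_apply, mulRight_apply, Module.End.one_apply, hR x b, smul_mul_assoc,
    map_add]
  abel

theorem pow_mulRight_sub_mulLeft_apply_mulRight [SMulCommClass F A A] (hR : IsRotaBaxter lam R)
    (n : ℕ) (b : A) :
    ((mulRight F R - mulLeft F R) ^ n) (mulRight F ((R ^ n) b)) =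
      R ^ n * mulRight F b * (R + lam • 1) ^ n := by
  set D := mulRight F R - mulLeft F R
  set Q : Module.End F A := R + lam • 1
  have hRQ : Commute R Q := (Commute.refl R).add_right ((Commute.one_right R).smul_right lam)
  have hrs : Commute (mulRight F R) (mulRight F Q) :=
    LinearMap.ext fun X ↦ by simp only [Module.End.mul_apply, mulRight_apply, mul_assoc, hRQ.eq]
  have hD : Commute D (mulLeft F R * mulRight F Q) :=
    ((commute_mulLeft_right R R).symm.mul_right hrs).sub_left
      ((Commute.refl _).mul_right (commute_mulLeft_right R Q))
  induction n generalizing b with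
  | zero => simp
  | succ n ih =>
    calc (D ^ (n + 1)) (mulRight F ((R ^ (n + 1)) b))
        = (D ^ n) (D (mulRight F (R ((R ^ n) b)))) := by rw [pow_succ, pow_succ']; rfl
      _ = (D ^ n) ((mulLeft F R * mulRight F Q) (mulRight F ((R ^ n) b))) := by
        congr 1
        exact (hR.mulRight_map_mul_sub_mul_mulRight_map _).trans (mul_assoc _ _ _)
      _ = (mulLeft F R * mulRight F Q) ((D ^ n) (mulRight F ((R ^ n) b))) := by
        rw [← Module.End.mul_apply, (hD.pow_left n).eq, Module.End.mul_apply]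
      _ = R ^ (n + 1) * mulRight F b * Q ^ (n + 1) := by
        rw [ih, pow_succ', pow_succ]
        simp only [Module.End.mul_apply, mulRight_apply, mulLeft_apply, mul_assoc]

end NonUnital

theorem exists_pow_mul_add_smul_one_pow_eq_zero {F A : Type*} [CommRing F] [NonAssocRing A]
    [Module F A] [SMulCommClass F A A] [IsScalarTower F A A] [IsNoetherian F (Module.End F A)]
    {lam : F} {R : A →ₗ[F] A} (hR : IsRotaBaxter lam R) :
    ∃ n, R ^ n * (R + lam • 1) ^ n = 0 := by
  set D := mulRight F R - mulLeft F R
  obtain ⟨n, hdisj, hn⟩ :=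
    ((Module.End.eventually_disjoint_ker_pow_range_pow D).and (Filter.eventually_ge_atTop 1)).exists
  refine ⟨n, Submodule.disjoint_def.mp hdisj _ ?_ ?_⟩
  · have hRS : Commute R (R ^ n * (R + lam • 1) ^ n) :=
      ((Commute.refl R).pow_right n).mul_right
        (((Commute.refl R).add_right ((Commute.one_right R).smul_right lam)).pow_right n)
    obtain ⟨m, rfl⟩ := Nat.exists_eq_add_of_le' hn
    rw [mem_ker, pow_succ, Module.End.mul_apply, LinearMap.sub_apply, mulRight_apply,
      mulLeft_apply, hRS.eq, sub_self, map_zero]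
  · refine ⟨mulRight F ((R ^ n) 1), ?_⟩
    rw [hR.pow_mulRight_sub_mulLeft_apply_mulRight, mulRight_one, ← Module.End.one_eq_id, mul_one]

end IsRotaBaxter

theorem spectrum_subset_of_pow_mul_add_smul_one_pow_eq_zero {F B : Type*} [Field F] [Ring B]
    [Algebra F B] {a : B} {c : F} {k l : ℕ} (h : a ^ k * (a + c • 1) ^ l = 0) :
    spectrum F a ⊆ {0, -c} := by
  nontriviality B
  intro μ hμ
  have hmem := spectrum.subset_polynomial_aeval a (X ^ k * (X + C c) ^ l) ⟨μ, hμ, rfl⟩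
  rw [map_mul, map_pow, map_pow, map_add, aeval_X, aeval_C, Algebra.algebraMap_eq_smul_one, h,
    spectrum.zero_eq, Set.mem_singleton_iff] at hmem
  simp only [eval_mul, eval_pow, eval_add, eval_X, eval_C, mul_eq_zero, pow_eq_zero_iff'] at hmem
  rcases hmem with ⟨hμ0, -⟩ | ⟨hμc, -⟩
  · exact .inl hμ0
  · exact .inr (eq_neg_of_add_eq_zero_left hμc)

theorem rb_spectrum_pos_char_general
    {F : Type*} [Field F]
    {A : Type*} [NonAssocRing A] [Module F A] [SMulCommClass F A A] [IsScalarTower F A A]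
    [FiniteDimensional F A]
    (lam : F) (R : A →ₗ[F] A)
    (hR : ∀ x y : A, R x * R y = R (R x * y + x * R y + lam • (x * y))) :
    (∃ k l : ℕ, R ^ k * (R + lam • LinearMap.id) ^ l = 0) ∧
      spectrum F (R : Module.End F A) ⊆ {0, -lam} := by
  obtain ⟨n, hn⟩ := IsRotaBaxter.exists_pow_mul_add_smul_one_pow_eq_zero hR
  rw [← Module.End.one_eq_id]
  exact ⟨⟨n, n, hn⟩, spectrum_subset_of_pow_mul_add_smul_one_pow_eq_zero hn⟩

/-- For a finite-dimensional unital (not necessarily associative) algebra `A`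
over a field `F` of positive characteristic `p` and a Rota–Baxter operator `R` of weight
`lam`, there are `k, l` with `R^k ∘ (R + lam • id)^l = 0`; in particular
`Spec(R) ⊆ {0, -lam}`. -/
theorem rb_spectrum_pos_char
    {F : Type*} [Field F] (p : ℕ) [CharP F p] (hp : 0 < p)
    {A : Type*} [NonAssocRing A] [Module F A] [SMulCommClass F A A] [IsScalarTower F A A]
    [FiniteDimensional F A]
    (lam : F) (R : A →ₗ[F] A)
    (hR : ∀ x y : A, R x * R y = R (R x * y + x * R y + lam • (x * y))) :
    (∃ k l : ℕ, R ^ k * (R + lam • LinearMap.id) ^ l = 0) ∧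
      spectrum F (R : Module.End F A) ⊆ {0, -lam} :=
  rb_spectrum_pos_char_general lam R hR
end

section
/- Let F be any field, let A be a finite-dimensional unital (not necessarily associative) F-algebra, and fix λ ∈ F. Then there exists a natural number n such that for every Rota–Baxter operator R of weight λ on A: (i) there is some k with 0 ≤ k ≤ n and (R^k ∘ (R + λ·id)^{n−k})(1) = 0, and (ii) there is some j with 0 ≤ j ≤ 2n and R^j ∘ (R + λ·id)^{2n−j} = 0 as a linear operator on A. -/
open Polynomial TensorProduct

set_option linter.unusedSectionVars false
set_option maxHeartbeats 1000000

section RBauxCore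

variable {E : Type*} [Field E] [IsAlgClosed E]
variable {B : Type*} [NonAssocRing B] [Module E B] [SMulCommClass E B B] [IsScalarTower E B B]
variable {lam : E} {R : B →ₗ[E] B}

lemma RBaux_lemA0 (hRB : ∀ x y : B, R x * R y = R (R x * y + x * R y + lam • (x * y)))
    {v : B} {α : E} (hv : R v = α • v) (w : B) :
    R (v * R w) = α • (v * R w) - (α + lam) • R (v * w) := by
  have h := hRB v w
  rw [hv, smul_mul_assoc, smul_mul_assoc] at h
  rw [show α • (v * w) + v * R w + lam • (v * w)
      = v * R w + (α + lam) • (v * w) by rw [add_smul]; abel] at h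
  rw [map_add, map_smul] at h
  rw [eq_sub_iff_add_eq, ← h]

lemma RBaux_lemA (hRB : ∀ x y : B, R x * R y = R (R x * y + x * R y + lam • (x * y)))
    {v : B} {α : E} (hv : R v = α • v) :
    ∀ k : ℕ, (((R - α • LinearMap.id) ^ (k+1)) : B →ₗ[E] B) (v * ((R ^ k) : B →ₗ[E] B) 1) = 0 := by
  intro k
  induction k with
  | zero =>
    rw [zero_add, pow_one]
    simp only [pow_zero, Module.End.one_apply, mul_one, LinearMap.sub_apply,
      LinearMap.smul_apply, LinearMap.id_apply, hv, sub_self]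
  | succ k ih =>
    set T : B →ₗ[E] B := R - α • LinearMap.id with hT
    have hRT : R = T + α • LinearMap.id := by rw [hT]; abel
    have hw : ((R ^ (k+1)) : B →ₗ[E] B) 1 = R (((R ^ k) : B →ₗ[E] B) 1) := by
      rw [pow_succ']; rfl
    have hstep : T (v * ((R ^ (k+1)) : B →ₗ[E] B) 1)
        = -(α + lam) • R (v * ((R ^ k) : B →ₗ[E] B) 1) := by
      have := RBaux_lemA0 hRB hv (((R ^ k) : B →ₗ[E] B) 1)
      rw [hT]
      simp only [LinearMap.sub_apply, LinearMap.smul_apply, LinearMap.id_apply, hw, this,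
        neg_smul]
      abel
    have hcomm : ∀ (m : ℕ) (x : B), ((T ^ m) : B →ₗ[E] B) (T x) = T (((T ^ m) : B →ₗ[E] B) x) := by
      intro m x
      rw [← Module.End.mul_apply, ← pow_succ, pow_succ', Module.End.mul_apply]
    calc ((T ^ (k+2)) : B →ₗ[E] B) (v * ((R ^ (k+1)) : B →ₗ[E] B) 1)
        = ((T ^ (k+1)) : B →ₗ[E] B) (T (v * ((R ^ (k+1)) : B →ₗ[E] B) 1)) := by
          rw [← Module.End.mul_apply, ← pow_succ]
      _ = 0 := by
          rw [hstep, map_smul]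
          have hkill : ((T ^ (k+1)) : B →ₗ[E] B) (R (v * ((R ^ k) : B →ₗ[E] B) 1)) = 0 := by
            have hx : R (v * ((R ^ k) : B →ₗ[E] B) 1)
                = T (v * ((R ^ k) : B →ₗ[E] B) 1) + α • (v * ((R ^ k) : B →ₗ[E] B) 1) := by
              rw [hT]
              simp only [LinearMap.sub_apply, LinearMap.smul_apply, LinearMap.id_apply]
              abel
            rw [hx, map_add, map_smul, hcomm, ih, map_zero, smul_zero, add_zero]
          rw [hkill, smul_zero]

lemma RBaux_lemB (hRB : ∀ x y : B, R x * R y = R (R x * y + x * R y + lam • (x * y)))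
    {v : B} {α : E} (hv : R v = α • v) (q : E[X]) :
    ∃ N : ℕ, (((R - α • LinearMap.id) ^ N) : B →ₗ[E] B) (v * (aeval R q) 1) = 0 := by
  induction q using Polynomial.induction_on' with
  | add p q hp hq =>
    obtain ⟨N1, h1⟩ := hp
    obtain ⟨N2, h2⟩ := hq
    refine ⟨N1 + N2, ?_⟩
    rw [map_add, LinearMap.add_apply, mul_add, map_add]
    have e1 : (((R - α • LinearMap.id) ^ (N1 + N2)) : B →ₗ[E] B) (v * (aeval R p) 1) = 0 := by
      rw [add_comm N1 N2, pow_add, Module.End.mul_apply, h1, map_zero]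
    have e2 : (((R - α • LinearMap.id) ^ (N1 + N2)) : B →ₗ[E] B) (v * (aeval R q) 1) = 0 := by
      rw [pow_add, Module.End.mul_apply, h2, map_zero]
    rw [e1, e2, add_zero]
  | monomial n a =>
    refine ⟨n + 1, ?_⟩
    have : (aeval R (monomial n a)) 1 = a • ((R ^ n : B →ₗ[E] B) 1) := by
      rw [aeval_monomial, Module.End.mul_apply, Module.algebraMap_end_eq_smul_id]
      simp only [LinearMap.smul_apply, LinearMap.id_apply]
    rw [this, mul_smul_comm, map_smul, RBaux_lemA hRB hv n, smul_zero]

lemma RBaux_lemC (hRB : ∀ x y : B, R x * R y = R (R x * y + x * R y + lam • (x * y)))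
    {v : B} {α : E} (hv : R v = α • v) (hα : α ≠ 0) (hal : α + lam ≠ 0)
    {γ : E} {y z : B} (hy : R y = γ • y + z) (hz : v * z = 0)
    (hnil : ∃ N : ℕ, (((R - α • LinearMap.id) ^ N) : B →ₗ[E] B) (v * y) = 0) :
    v * y = 0 := by
  have key : (α * γ) • (v * y) = (α + γ + lam) • R (v * y) := by
    have h := hRB v y
    rw [hv, hy] at h
    rw [smul_mul_assoc α v (γ • y + z), smul_mul_assoc α v y,
        mul_add v (γ • y) z, mul_smul_comm γ v y, hz, add_zero, smul_smul] at h
    rw [show α • (v * y) + γ • (v * y) + lam • (v * y) = (α + γ + lam) • (v * y) by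
        rw [add_smul, add_smul], map_smul] at h
    exact h
  set u := v * y with hu
  by_cases hc : α + γ + lam = 0
  · -- then α*γ ≠ 0 and (α*γ)•u = 0
    rw [hc, zero_smul] at key
    have hγ : γ ≠ 0 := by
      intro h0
      rw [h0, add_zero] at hc
      exact hal hc
    have : α * γ ≠ 0 := mul_ne_zero hα hγ
    exact (smul_eq_zero.mp key).resolve_left this
  · set β := α * γ / (α + γ + lam) with hβ
    have hRu : R u = β • u := by
      rw [hβ, div_eq_inv_mul, ← smul_smul, eq_inv_smul_iff₀ hc, ← key]
    have hTu : ∀ M : ℕ, (((R - α • LinearMap.id) ^ M) : B →ₗ[E] B) u = (β - α) ^ M • u := by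
      intro M
      induction M with
      | zero => simp
      | succ M ih =>
        rw [pow_succ, Module.End.mul_apply]
        rw [show ((R - α • LinearMap.id) : B →ₗ[E] B) u = (β - α) • u by
          simp only [LinearMap.sub_apply, LinearMap.smul_apply, LinearMap.id_apply, hRu,
            sub_smul]]
        rw [map_smul, ih, smul_smul, ← pow_succ']
    obtain ⟨N, hN⟩ := hnil
    by_contra hu0
    rw [hTu N] at hN
    have h1 : (β - α) ^ N = 0 := by
      rcases smul_eq_zero.mp hN with h | h
      · exact h
      · exact absurd h hu0
    have h2 : β = α := by
      obtain ⟨hba, -⟩ := pow_eq_zero_iff'.mp h1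
      exact sub_eq_zero.mp hba
    have h3 : α * γ = α * (α + γ + lam) := by
      rw [hβ, div_eq_iff hc] at h2
      exact h2
    have h4 : α * (α + lam) = 0 := by linear_combination -h3
    exact mul_ne_zero hα hal h4

lemma RBaux_lemD (hRB : ∀ x y : B, R x * R y = R (R x * y + x * R y + lam • (x * y)))
    {v : B} {α : E} (hv : R v = α • v) (hα : α ≠ 0) (hal : α + lam ≠ 0) :
    ∀ (N : ℕ) (p q : E[X]), p.natDegree ≤ N → p ≠ 0 → (aeval R (p * q)) 1 = 0 →
      v * ((aeval R q) 1) = 0 := by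
  have const : ∀ (p q : E[X]), p.natDegree = 0 → p ≠ 0 → (aeval R (p * q)) 1 = 0 →
      v * ((aeval R q) 1) = 0 := by
    intro p q hdeg hp0 h
    obtain ⟨c, rfl⟩ := natDegree_eq_zero.mp hdeg
    have hc : c ≠ 0 := fun h' => hp0 (by rw [h', map_zero])
    rw [map_mul, aeval_C, Module.algebraMap_end_eq_smul_id, Module.End.mul_apply,
      LinearMap.smul_apply, LinearMap.id_apply] at h
    rw [smul_eq_zero] at h
    rcases h with h | h
    · exact absurd h hc
    · rw [h, mul_zero]
  intro N
  induction N with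
  | zero =>
    intro p q hdeg hp0 h
    exact const p q (Nat.le_zero.mp hdeg) hp0 h
  | succ N ih =>
    intro p q hdeg hp0 h
    by_cases hd0 : p.natDegree = 0
    · exact const p q hd0 hp0 h
    · have hdeg' : p.degree ≠ 0 := by
        rw [degree_eq_natDegree hp0]
        exact_mod_cast hd0
      obtain ⟨γ, hγ⟩ := IsAlgClosed.exists_root p hdeg'
      obtain ⟨p₁, hfact⟩ := dvd_iff_isRoot.mpr hγ
      have hp₁0 : p₁ ≠ 0 := by
        rintro rfl
        rw [mul_zero] at hfact
        exact hp0 hfact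
      have hdp₁ : p₁.natDegree ≤ N := by
        have : p.natDegree = 1 + p₁.natDegree := by
          rw [hfact, natDegree_mul (X_sub_C_ne_zero γ) hp₁0, natDegree_X_sub_C]
        omega
      have h' : (aeval R (p₁ * ((X - C γ) * q))) 1 = 0 := by
        rw [show p₁ * ((X - C γ) * q) = ((X - C γ) * p₁) * q by ring, ← hfact]
        exact h
      have hz : v * ((aeval R ((X - C γ) * q)) 1) = 0 := ih p₁ ((X - C γ) * q) hdp₁ hp₁0 h'
      set y := (aeval R q) 1 with hy
      have hzy : (aeval R ((X - C γ) * q)) 1 = R y - γ • y := by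
        rw [map_mul, Module.End.mul_apply, map_sub, aeval_X, aeval_C,
          Module.algebraMap_end_eq_smul_id]
        simp only [LinearMap.sub_apply, LinearMap.smul_apply, LinearMap.id_apply, hy]
      rw [hzy] at hz
      refine RBaux_lemC hRB hv hα hal (γ := γ) (y := y) (z := R y - γ • y) (by abel) hz ?_
      exact RBaux_lemB hRB hv q

lemma RBaux_polyfact (lam : E) : ∀ (N : ℕ) (p : E[X]), p.natDegree = N → p.Monic →
    (∀ γ : E, p.IsRoot γ → γ = 0 ∨ γ = -lam) →
    ∃ c e : ℕ, c + e = N ∧ p = X ^ c * (X + C lam) ^ e := by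
  intro N
  induction N with
  | zero =>
    intro p hdeg hmon _
    refine ⟨0, 0, rfl, ?_⟩
    rw [hmon.natDegree_eq_zero.mp hdeg]
    simp
  | succ N ih =>
    intro p hdeg hmon hroots
    have hp0 : p ≠ 0 := hmon.ne_zero
    have hdeg' : p.degree ≠ 0 := by
      rw [degree_eq_natDegree hp0, hdeg]
      exact_mod_cast Nat.succ_ne_zero N
    obtain ⟨γ, hγ⟩ := IsAlgClosed.exists_root p hdeg'
    obtain ⟨p₁, hfact⟩ := dvd_iff_isRoot.mpr hγ
    have hp₁0 : p₁ ≠ 0 := by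
      rintro rfl
      rw [mul_zero] at hfact
      exact hp0 hfact
    have hmon₁ : p₁.Monic := by
      have := hmon
      rw [hfact] at this
      exact (monic_X_sub_C γ).of_mul_monic_left this
    have hdeg₁ : p₁.natDegree = N := by
      have : p.natDegree = 1 + p₁.natDegree := by
        rw [hfact, natDegree_mul (X_sub_C_ne_zero γ) hp₁0, natDegree_X_sub_C]
      omega
    have hroots₁ : ∀ γ' : E, p₁.IsRoot γ' → γ' = 0 ∨ γ' = -lam := by
      intro γ' h'
      apply hroots
      rw [hfact]
      exact root_mul_left_of_isRoot _ h'
    obtain ⟨c, e, hce, hp₁⟩ := ih p₁ hdeg₁ hmon₁ hroots₁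
    rcases hroots γ hγ with h0 | h0
    · refine ⟨c + 1, e, by omega, ?_⟩
      rw [hfact, hp₁, h0, map_zero, sub_zero]
      ring
    · refine ⟨c, e + 1, by omega, ?_⟩
      rw [hfact, hp₁, h0]
      rw [map_neg, sub_neg_eq_add]
      ring

theorem RBaux_coreE [FiniteDimensional E B]
    (hRB : ∀ x y : B, R x * R y = R (R x * y + x * R y + lam • (x * y))) :
    ∃ c e : ℕ, c + e ≤ Module.finrank E B ∧
      (R ^ c) * (R + lam • LinearMap.id) ^ e = 0 := by
  have hint : IsIntegral E R := Algebra.IsIntegral.isIntegral R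
  set m := minpoly E R with hm
  have hm0 : m ≠ 0 := minpoly.ne_zero hint
  have hmonic : m.Monic := minpoly.monic hint
  have haev : (aeval R) m = 0 := minpoly.aeval E R
  have hroots : ∀ γ : E, m.IsRoot γ → γ = 0 ∨ γ = -lam := by
    intro γ hγ
    by_contra hn
    push_neg at hn
    obtain ⟨hγ0, hγl⟩ := hn
    have heig : Module.End.HasEigenvalue R γ := Module.End.hasEigenvalue_of_isRoot hγ
    obtain ⟨w, hw⟩ := heig.exists_hasEigenvector
    have hvw : R w = γ • w := hw.apply_eq_smul
    have hal : γ + lam ≠ 0 := by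
      intro h
      exact hγl (by linear_combination h)
    have h0 : (aeval R (m * 1)) 1 = 0 := by
      rw [mul_one, haev, LinearMap.zero_apply]
    have := RBaux_lemD hRB hvw hγ0 hal m.natDegree m 1 le_rfl hm0 h0
    rw [aeval_one] at this
    have h1 : w = 0 := by simpa using this
    exact hw.2 h1
  obtain ⟨c, e, hce, hfact⟩ := RBaux_polyfact lam m.natDegree m rfl hmonic hroots
  refine ⟨c, e, ?_, ?_⟩
  · rw [hce]
    calc m.natDegree ≤ (LinearMap.charpoly R).natDegree :=
          natDegree_le_of_dvd (LinearMap.minpoly_dvd_charpoly R) (LinearMap.charpoly_monic R).ne_zero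
      _ = Module.finrank E B := LinearMap.charpoly_natDegree R
  · have := haev
    rw [hfact, map_mul, map_pow, map_pow, aeval_X, map_add, aeval_X, aeval_C,
      Module.algebraMap_end_eq_smul_id] at this
    exact this

end RBauxCore

section RBauxBC

variable {F : Type*} [Field F]
variable {A : Type*} [NonAssocRing A] [Module F A] [SMulCommClass F A A] [IsScalarTower F A A]
variable (E : Type*) [Field E] [Algebra F E]

lemma RBaux_bc_RB (lam : F) (R : A →ₗ[F] A)
    (hRB : ∀ x y : A, R x * R y = R (R x * y + x * R y + lam • (x * y))) :
    ∀ x y : E ⊗[F] A, (R.baseChange E) x * (R.baseChange E) y =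
      (R.baseChange E) ((R.baseChange E) x * y + x * (R.baseChange E) y
        + (algebraMap F E lam) • (x * y)) := by
  intro x y
  induction x using TensorProduct.induction_on with
  | zero => simp
  | add x₁ x₂ ih1 ih2 =>
    rw [map_add, add_mul, ih1, ih2, ← map_add]
    congr 1
    simp only [add_mul, smul_add]
    abel
  | tmul e a =>
    induction y using TensorProduct.induction_on with
    | zero => simp
    | add y₁ y₂ ih1 ih2 =>
      rw [map_add, mul_add, ih1, ih2, ← map_add]
      congr 1
      simp only [mul_add, smul_add]
      abel
    | tmul f b =>
      rw [LinearMap.baseChange_tmul, LinearMap.baseChange_tmul,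
        Algebra.TensorProduct.tmul_mul_tmul, Algebra.TensorProduct.tmul_mul_tmul,
        Algebra.TensorProduct.tmul_mul_tmul, Algebra.TensorProduct.tmul_mul_tmul,
        algebraMap_smul, ← TensorProduct.tmul_smul, ← TensorProduct.tmul_add,
        ← TensorProduct.tmul_add, LinearMap.baseChange_tmul, hRB]

lemma RBaux_tmul_one_inj (z : A) (h : (1 : E) ⊗ₜ[F] z = 0) : z = 0 := by
  have hinj : Function.Injective (LinearMap.rTensor A (Algebra.linearMap F E)) :=
    Module.Flat.rTensor_preserves_injective_linearMap _ (algebraMap F E).injective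
  have h1 : (LinearMap.rTensor A (Algebra.linearMap F E)) ((1 : F) ⊗ₜ[F] z)
      = (1 : E) ⊗ₜ[F] z := by
    simp [LinearMap.rTensor_tmul]
  have h2 : ((1 : F) ⊗ₜ[F] z : F ⊗[F] A) = 0 := by
    apply hinj
    rw [h1, h, map_zero]
  have := congrArg (TensorProduct.lid F A) h2
  simpa using this

lemma RBaux_pow_tmul (f : A →ₗ[F] A) (f' : E ⊗[F] A →ₗ[E] E ⊗[F] A)
    (h : ∀ x : A, f' ((1:E) ⊗ₜ[F] x) = (1:E) ⊗ₜ[F] (f x)) :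
    ∀ (k : ℕ) (x : A), ((f' ^ k)) ((1:E) ⊗ₜ[F] x) = (1:E) ⊗ₜ[F] ((f ^ k) x) := by
  intro k
  induction k with
  | zero => intro x; simp
  | succ k ih =>
    intro x
    rw [pow_succ, Module.End.mul_apply, h, ih (f x), pow_succ, Module.End.mul_apply]

end RBauxBC


/-- For a finite-dimensional unital (not necessarily associative) algebra `A`
over any field `F` and fixed `lam ∈ F`, there is `n` such that every Rota–Baxter operator
`R` of weight `lam` satisfies (i) `(R^k ∘ (R + lam•id)^(n-k))(1) = 0` for some `k ≤ n`,
and (ii) `R^j ∘ (R + lam•id)^(2n-j) = 0` for some `j ≤ 2n`. -/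
theorem rb_index_bound_finite_dimensional
    {F : Type*} [Field F]
    {A : Type*} [NonAssocRing A] [Module F A] [SMulCommClass F A A] [IsScalarTower F A A]
    [FiniteDimensional F A] (lam : F) :
    ∃ n : ℕ, ∀ R : A →ₗ[F] A,
      (∀ x y : A, R x * R y = R (R x * y + x * R y + lam • (x * y))) →
      (∃ k ≤ n, (R ^ k) ((((R + lam • LinearMap.id) ^ (n - k)) : A →ₗ[F] A) 1) = 0) ∧
      (∃ j ≤ 2 * n, R ^ j * (R + lam • LinearMap.id) ^ (2 * n - j) = 0) := by
  classical
  set d := Module.finrank F A with hd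
  refine ⟨d, fun R hR => ?_⟩
  set E := AlgebraicClosure F
  set R' : E ⊗[F] A →ₗ[E] E ⊗[F] A := R.baseChange E with hR'
  have hRB' := RBaux_bc_RB E lam R hR
  obtain ⟨c, e, hce, hzero⟩ := RBaux_coreE (lam := algebraMap F E lam) (R := R') hRB'
  rw [Module.finrank_baseChange, ← hd] at hce
  set S : A →ₗ[F] A := R + lam • LinearMap.id with hS
  set S' : E ⊗[F] A →ₗ[E] E ⊗[F] A := R' + (algebraMap F E lam) • LinearMap.id with hS'
  have hRstep : ∀ x : A, R' ((1:E) ⊗ₜ[F] x) = (1:E) ⊗ₜ[F] (R x) := fun x => by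
    rw [hR', LinearMap.baseChange_tmul]
  have hSstep : ∀ x : A, S' ((1:E) ⊗ₜ[F] x) = (1:E) ⊗ₜ[F] (S x) := by
    intro x
    rw [hS', hS]
    simp only [LinearMap.add_apply, LinearMap.smul_apply, LinearMap.id_apply, hRstep,
      algebraMap_smul]
    rw [TensorProduct.tmul_add, TensorProduct.tmul_smul]
  have hmain : (R ^ c) * (S ^ e) = 0 := by
    apply LinearMap.ext
    intro x
    have h0 : ((R' ^ c) * (S' ^ e)) ((1:E) ⊗ₜ[F] x) = 0 := by rw [hzero]; rfl
    rw [Module.End.mul_apply, RBaux_pow_tmul E S S' hSstep, RBaux_pow_tmul E R R' hRstep] at h0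
    rw [Module.End.mul_apply, LinearMap.zero_apply]
    exact RBaux_tmul_one_inj E _ h0
  have hcd : c ≤ d := le_trans (Nat.le_add_right c e) hce
  constructor
  · refine ⟨c, hcd, ?_⟩
    have hop : (R ^ c) * (S ^ (d - c)) = 0 := by
      rw [show S ^ (d - c) = S ^ e * S ^ (d - c - e) by rw [← pow_add]; congr 1; omega,
        ← mul_assoc, hmain, zero_mul]
    calc (R ^ c) ((S ^ (d - c)) 1) = ((R ^ c) * (S ^ (d - c))) 1 := rfl
      _ = 0 := by rw [hop]; rfl
  · refine ⟨c, by omega, ?_⟩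
    rw [show S ^ (2 * d - c) = S ^ e * S ^ (2 * d - c - e) by rw [← pow_add]; congr 1; omega,
      ← mul_assoc, hmain, zero_mul]
end

section
/- Let A be a unital (not necessarily associative) algebra over a field F and let R be a Rota–Baxter operator of weight λ on A. Then the elements R^k(1), k ∈ ℕ, pairwise commute and associate: for all natural numbers k, l, m one has R^k(1)·R^l(1) = R^l(1)·R^k(1) and (R^k(1)·R^l(1))·R^m(1) = R^k(1)·(R^l(1)·R^m(1)). Consequently the subalgebra generated by {R^k(1) : k ∈ ℕ} is commutative and associative. -/
/-- For a unital (not necessarily associative) algebra `A` over a field `F`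
and a Rota–Baxter operator `R` of weight `lam`, the elements `R^k(1)` pairwise commute
and associate; consequently the (non-unital) subalgebra generated by `{R^k(1) : k ∈ ℕ}`
is commutative and associative. -/
theorem rb_powers_of_one_commute_and_associate
    {F : Type*} [Field F]
    {A : Type*} [NonAssocRing A] [Module F A] [SMulCommClass F A A] [IsScalarTower F A A]
    (lam : F) (R : A →ₗ[F] A)
    (hR : ∀ x y : A, R x * R y = R (R x * y + x * R y + lam • (x * y))) :
    (∀ k l m : ℕ,
      (R ^ k) (1 : A) * (R ^ l) (1 : A) = (R ^ l) (1 : A) * (R ^ k) (1 : A) ∧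
      ((R ^ k) (1 : A) * (R ^ l) (1 : A)) * (R ^ m) (1 : A)
        = (R ^ k) (1 : A) * ((R ^ l) (1 : A) * (R ^ m) (1 : A))) ∧
    (∀ x ∈ NonUnitalAlgebra.adjoin F (Set.range fun k : ℕ => (R ^ k) (1 : A)),
     ∀ y ∈ NonUnitalAlgebra.adjoin F (Set.range fun k : ℕ => (R ^ k) (1 : A)),
      x * y = y * x) ∧
    (∀ x ∈ NonUnitalAlgebra.adjoin F (Set.range fun k : ℕ => (R ^ k) (1 : A)),
     ∀ y ∈ NonUnitalAlgebra.adjoin F (Set.range fun k : ℕ => (R ^ k) (1 : A)),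
     ∀ z ∈ NonUnitalAlgebra.adjoin F (Set.range fun k : ℕ => (R ^ k) (1 : A)),
      (x * y) * z = x * (y * z)) := by
  set e : ℕ → A := fun k => (R ^ k) (1 : A) with he
  have he0 : e 0 = 1 := by simp [he]
  have hes : ∀ k, e (k + 1) = R (e k) := by
    intro k
    simp [he, pow_succ', Module.End.mul_apply]
  have hrec : ∀ k l, e (k + 1) * e (l + 1)
      = R (e (k + 1) * e l + e k * e (l + 1) + lam • (e k * e l)) := by
    intro k l
    rw [hes k, hes l, hR, ← hes k, ← hes l]
  -- commutativity
  have hcomm : ∀ n k l, k + l ≤ n → e k * e l = e l * e k := by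
    intro n
    induction n with
    | zero =>
      intro k l h
      have hk : k = 0 := by omega
      have hl : l = 0 := by omega
      subst hk hl; rfl
    | succ n ih =>
      intro k l h
      match k, l with
      | 0, l => rw [he0, one_mul, mul_one]
      | k + 1, 0 => rw [he0, one_mul, mul_one]
      | k + 1, l + 1 =>
        rw [hrec k l, hrec l k,
          ih (k + 1) l (by omega), ih k (l + 1) (by omega), ih k l (by omega)]
        congr 1
        abel
  -- associativity
  have hassoc : ∀ n k l m, k + l + m ≤ n →
      (e k * e l) * e m = e k * (e l * e m) := by
    intro n
    induction n with
    | zero =>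
      intro k l m h
      have hk : k = 0 := by omega
      have hl : l = 0 := by omega
      have hm : m = 0 := by omega
      subst hk hl hm
      rw [he0, one_mul, one_mul]
    | succ n ih =>
      intro k l m h
      match k, l, m with
      | 0, l, m => rw [he0, one_mul, one_mul]
      | k + 1, 0, m => rw [he0, mul_one, one_mul]
      | k + 1, l + 1, 0 => rw [he0, mul_one, mul_one]
      | k + 1, l + 1, m + 1 =>
        have hL : (e (k+1) * e (l+1)) * e (m+1)
            = R ((e (k+1) * e (l+1)) * e m
                + (e (k+1) * e l + e k * e (l+1) + lam • (e k * e l)) * e (m+1)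
                + lam • ((e (k+1) * e l + e k * e (l+1) + lam • (e k * e l)) * e m)) := by
          conv_lhs => rw [hrec k l, hes m, hR]
          rw [← hes m, ← hrec k l]
        have hRt : e (k+1) * (e (l+1) * e (m+1))
            = R (e (k+1) * (e (l+1) * e m + e l * e (m+1) + lam • (e l * e m))
                + e k * (e (l+1) * e (m+1))
                + lam • (e k * (e (l+1) * e m + e l * e (m+1) + lam • (e l * e m)))) := by
          conv_lhs => rw [hrec l m, hes k, hR]
          rw [← hes k, ← hrec l m]
        rw [hL, hRt]
        congr 1
        rw [add_mul, add_mul, smul_mul_assoc, add_mul, add_mul, smul_mul_assoc,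
          mul_add, mul_add, mul_smul_comm, mul_add, mul_add, mul_smul_comm,
          ih (k+1) (l+1) m (by omega), ih (k+1) l (m+1) (by omega),
          ih k (l+1) (m+1) (by omega), ih k l (m+1) (by omega),
          ih (k+1) l m (by omega), ih k (l+1) m (by omega), ih k l m (by omega)]
        rw [smul_add, smul_add, smul_add, smul_add, smul_smul]
        abel
  -- the span of the e's
  set M : Submodule F A := Submodule.span F (Set.range e) with hM
  have heM : ∀ k, e k ∈ M := fun k => Submodule.subset_span ⟨k, rfl⟩
  have hRM : ∀ x ∈ M, R x ∈ M := by
    intro x hx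
    have hle : M ≤ Submodule.comap R M := by
      rw [hM]
      refine Submodule.span_le.mpr ?_
      rintro _ ⟨k, rfl⟩
      show R (e k) ∈ M
      rw [← hes k]
      exact heM (k + 1)
    exact hle hx
  have hmulM : ∀ n k l, k + l ≤ n → e k * e l ∈ M := by
    intro n
    induction n with
    | zero =>
      intro k l h
      have hk : k = 0 := by omega
      have hl : l = 0 := by omega
      subst hk hl
      rw [he0, one_mul]; exact heM 0
    | succ n ih =>
      intro k l h
      match k, l with
      | 0, l => rw [he0, one_mul]; exact heM l
      | k + 1, 0 => rw [he0, mul_one]; exact heM (k + 1)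
      | k + 1, l + 1 =>
        rw [hrec k l]
        exact hRM _ (add_mem (add_mem (ih (k+1) l (by omega)) (ih k (l+1) (by omega)))
          (Submodule.smul_mem _ _ (ih k l (by omega))))
  have hMmul : ∀ x ∈ M, ∀ y ∈ M, x * y ∈ M := by
    intro x hx y hy
    induction hx, hy using Submodule.span_induction₂ with
    | mem_mem a b ha hb =>
      obtain ⟨k, rfl⟩ := ha; obtain ⟨l, rfl⟩ := hb
      exact hmulM (k + l) k l le_rfl
    | zero_left b hb => simp
    | zero_right a ha => simp
    | add_left a b c _ _ _ h1 h2 => rw [add_mul]; exact add_mem h1 h2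
    | add_right a b c _ _ _ h1 h2 => rw [mul_add]; exact add_mem h1 h2
    | smul_left r a b _ _ h1 => rw [smul_mul_assoc]; exact Submodule.smul_mem _ _ h1
    | smul_right r a b _ _ h1 => rw [mul_smul_comm]; exact Submodule.smul_mem _ _ h1
  have hadjM : ∀ x ∈ NonUnitalAlgebra.adjoin F (Set.range e), x ∈ M := by
    intro x hx
    induction hx using NonUnitalAlgebra.adjoin_induction with
    | mem a ha => exact Submodule.subset_span ha
    | add a b _ _ h1 h2 => exact add_mem h1 h2
    | zero => exact zero_mem M
    | mul a b _ _ h1 h2 => exact hMmul a h1 b h2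
    | smul r a _ h1 => exact Submodule.smul_mem _ _ h1
  have hcommM : ∀ x ∈ M, ∀ y ∈ M, x * y = y * x := by
    intro x hx y hy
    induction hx, hy using Submodule.span_induction₂ with
    | mem_mem a b ha hb =>
      obtain ⟨k, rfl⟩ := ha; obtain ⟨l, rfl⟩ := hb
      exact hcomm (k + l) k l le_rfl
    | zero_left b hb => rw [zero_mul, mul_zero]
    | zero_right a ha => rw [zero_mul, mul_zero]
    | add_left a b c _ _ _ h1 h2 => rw [add_mul, mul_add, h1, h2]
    | add_right a b c _ _ _ h1 h2 => rw [mul_add, add_mul, h1, h2]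
    | smul_left r a b _ _ h1 => rw [smul_mul_assoc, mul_smul_comm, h1]
    | smul_right r a b _ _ h1 => rw [mul_smul_comm, smul_mul_assoc, h1]
  have hassocM : ∀ x ∈ M, ∀ y ∈ M, ∀ z ∈ M, (x * y) * z = x * (y * z) := by
    intro x hx
    induction hx using Submodule.span_induction with
    | mem a ha =>
      obtain ⟨k, rfl⟩ := ha
      intro y hy
      induction hy using Submodule.span_induction with
      | mem b hb =>
        obtain ⟨l, rfl⟩ := hb
        intro z hz
        induction hz using Submodule.span_induction with
        | mem c hc =>
          obtain ⟨m, rfl⟩ := hc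
          exact hassoc (k + l + m) k l m le_rfl
        | zero => rw [mul_zero, mul_zero, mul_zero]
        | add u v _ _ h1 h2 => rw [mul_add, mul_add, mul_add, h1, h2]
        | smul r u _ h1 => rw [mul_smul_comm, mul_smul_comm, mul_smul_comm, h1]
      | zero => intro z hz; rw [mul_zero, zero_mul, mul_zero]
      | add u v _ _ h1 h2 =>
        intro z hz
        rw [mul_add, add_mul, add_mul, mul_add, h1 z hz, h2 z hz]
      | smul r u _ h1 =>
        intro z hz
        rw [mul_smul_comm, smul_mul_assoc, smul_mul_assoc, mul_smul_comm, h1 z hz]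
    | zero => intro y hy z hz; rw [zero_mul, zero_mul, zero_mul]
    | add u v _ _ h1 h2 =>
      intro y hy z hz
      rw [add_mul, add_mul, add_mul, h1 y hy z hz, h2 y hy z hz]
    | smul r u _ h1 =>
      intro y hy z hz
      rw [smul_mul_assoc, smul_mul_assoc, smul_mul_assoc, h1 y hy z hz]
  refine ⟨fun k l m => ⟨hcomm (k + l) k l le_rfl, hassoc (k + l + m) k l m le_rfl⟩,
    fun x hx y hy => hcommM x (hadjM x hx) y (hadjM y hy),
    fun x hx y hy z hz => hassocM x (hadjM x hx) y (hadjM y hy) z (hadjM z hz)⟩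
end

section
/- Let A be a unital (not necessarily associative) algebra over a field F and let R be a Rota–Baxter operator of weight λ on A. Then for all natural numbers k and l, R^k(1)·R^l(1) = Σ_{j=0}^{min(k,l)} λ^j · C(k,j) · C(k+l−j, k) · R^{k+l−j}(1), where C(a,b) denotes the binomial coefficient. -/
private lemma rb_choose_pascal_aux (a b i : ℕ) (hi : i ≤ a) :
    (a+1).choose (i+1) * (a+b+1-i).choose (a+1)
      = (a+1).choose (i+1) * (a+b-i).choose (a+1)
        + a.choose (i+1) * (a+b-i).choose a
        + a.choose i * (a+b-i).choose a := by
  have h1 : a+b+1-i = (a+b-i)+1 := by omega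
  rw [h1, Nat.choose_succ_succ (a+b-i) a,
    show (a+1).choose (i+1) = a.choose i + a.choose (i+1) from Nat.choose_succ_succ a i]
  ring

/-- For a unital (not necessarily associative) algebra `A` over a field `F`
and a Rota–Baxter operator `R` of weight `lam`,
`R^k(1) * R^l(1) = Σ_{j=0}^{min(k,l)} lam^j C(k,j) C(k+l−j,k) R^{k+l−j}(1)`. -/
theorem rb_powers_of_one_product_formula
    {F : Type*} [Field F]
    {A : Type*} [NonAssocRing A] [Module F A] [SMulCommClass F A A] [IsScalarTower F A A]
    (lam : F) (R : A →ₗ[F] A)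
    (hR : ∀ x y : A, R x * R y = R (R x * y + x * R y + lam • (x * y))) :
    ∀ k l : ℕ,
      (R ^ k) (1 : A) * (R ^ l) (1 : A)
        = ∑ j ∈ Finset.range (min k l + 1),
            (lam ^ j * (Nat.choose k j : F) * (Nat.choose (k + l - j) k : F))
              • (R ^ (k + l - j)) (1 : A) := by
  set u : ℕ → A := fun n => (R ^ n) (1 : A) with hu
  have hupow : ∀ n, R (u n) = u (n+1) := by
    intro n
    show R ((R ^ n) 1) = (R ^ (n+1)) 1
    rw [pow_succ', Module.End.mul_apply]
  have hRsum : ∀ (s : Finset ℕ) (c : ℕ → F) (e : ℕ → ℕ),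
      R (∑ j ∈ s, c j • u (e j)) = ∑ j ∈ s, c j • u (e j + 1) := by
    intro s c e
    rw [map_sum]
    exact Finset.sum_congr rfl fun j _ => by rw [map_smul, hupow]
  have key : ∀ n k l, k + l = n →
      u k * u l
        = ∑ j ∈ Finset.range (min k l + 1),
            (lam ^ j * (Nat.choose k j : F) * (Nat.choose (k + l - j) k : F))
              • u (k + l - j) := by
    intro n
    induction n using Nat.strong_induction_on with
    | _ n ih =>
      intro k l hkl
      match k, l with
      | 0, l =>
        show (R ^ 0) (1:A) * u l = _
        simp [u]
      | (k+1), 0 =>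
        show u (k+1) * (R ^ 0) (1:A) = _
        simp [u]
      | (a+1), (b+1) =>
        set m := min a b with hm
        -- basic multiplication expansion
        have h1 : u (a+1) * u (b+1)
            = R (u (a+1) * u b + u a * u (b+1) + lam • (u a * u b)) := by
          have h := hR (u a) (u b)
          rw [hupow a, hupow b] at h
          exact h
        rw [h1]
        rw [ih (a+1+b) (by omega) (a+1) b rfl, ih (a+(b+1)) (by omega) a (b+1) rfl,
          ih (a+b) (by omega) a b rfl]
        rw [map_add, map_add, map_smul, hRsum, hRsum, hRsum]
        -- canonical term functions
        set t1 : ℕ → A := fun j =>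
          (lam ^ j * ((a+1).choose j : F) * ((a+b+1-j).choose (a+1) : F)) • u (a+b+2-j) with ht1
        set t2 : ℕ → A := fun j =>
          (lam ^ j * (a.choose j : F) * ((a+b+1-j).choose a : F)) • u (a+b+2-j) with ht2
        set t3 : ℕ → A := fun j =>
          if j = 0 then 0 else
            (lam ^ j * (a.choose (j-1) : F) * ((a+b+1-j).choose a : F)) • u (a+b+2-j) with ht3
        have E1 : (∑ j ∈ Finset.range (min (a+1) b + 1),
              (lam ^ j * ((a+1).choose j : F) * (((a+1)+b-j).choose (a+1) : F))
                • u ((a+1)+b-j + 1))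
            = ∑ j ∈ Finset.range (m+2), t1 j := by
          rw [show (∑ j ∈ Finset.range (min (a+1) b + 1),
              (lam ^ j * ((a+1).choose j : F) * (((a+1)+b-j).choose (a+1) : F))
                • u ((a+1)+b-j + 1)) = ∑ j ∈ Finset.range (min (a+1) b + 1), t1 j from
            Finset.sum_congr rfl fun j hj => by
              simp only [Finset.mem_range] at hj
              rw [ht1]
              have e1 : (a+1)+b-j = a+b+1-j := by omega
              have e2 : (a+1)+b-j+1 = a+b+2-j := by omega
              rw [e2, e1]]
          refine Finset.sum_subset (Finset.range_subset_range.2 (by omega)) fun j hjt hjs => ?_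
          simp only [Finset.mem_range] at hjt hjs
          simp only [ht1]
          have : a+b+1-j < a+1 := by omega
          rw [Nat.choose_eq_zero_of_lt this]
          simp
        have E2 : (∑ j ∈ Finset.range (min a (b+1) + 1),
              (lam ^ j * (a.choose j : F) * ((a+(b+1)-j).choose a : F))
                • u (a+(b+1)-j + 1))
            = ∑ j ∈ Finset.range (m+2), t2 j := by
          rw [show (∑ j ∈ Finset.range (min a (b+1) + 1),
              (lam ^ j * (a.choose j : F) * ((a+(b+1)-j).choose a : F))
                • u (a+(b+1)-j + 1)) = ∑ j ∈ Finset.range (min a (b+1) + 1), t2 j from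
            Finset.sum_congr rfl fun j hj => by
              simp only [Finset.mem_range] at hj
              rw [ht2]
              have e1 : a+(b+1)-j = a+b+1-j := by omega
              have e2 : a+(b+1)-j+1 = a+b+2-j := by omega
              rw [e2, e1]]
          refine Finset.sum_subset (Finset.range_subset_range.2 (by omega)) fun j hjt hjs => ?_
          simp only [Finset.mem_range] at hjt hjs
          simp only [ht2]
          have : a < j := by omega
          rw [Nat.choose_eq_zero_of_lt this]
          simp
        have E3 : (lam • ∑ j ∈ Finset.range (min a b + 1),
              (lam ^ j * (a.choose j : F) * ((a+b-j).choose a : F)) • u (a+b-j + 1))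
            = ∑ j ∈ Finset.range (m+2), t3 j := by
          conv_rhs => rw [Finset.sum_range_succ']
          have ht30 : t3 0 = 0 := by simp [ht3]
          rw [ht30, add_zero, Finset.smul_sum]
          refine Finset.sum_congr rfl fun j hj => ?_
          simp only [Finset.mem_range] at hj
          simp only [ht3, Nat.succ_ne_zero, if_false, Nat.add_sub_cancel]
          have e1 : a+b+1-(j+1) = a+b-j := by omega
          have e2 : a+b+2-(j+1) = a+b-j+1 := by omega
          rw [e1, e2, smul_smul]
          ring_nf
        rw [E1, E2, E3, ← Finset.sum_add_distrib, ← Finset.sum_add_distrib]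
        have hmin : min (a+1) (b+1) = m + 1 := by omega
        rw [hmin]
        refine Finset.sum_congr rfl fun j hj => ?_
        simp only [Finset.mem_range] at hj
        have e1 : (a+1)+(b+1)-j = a+b+2-j := by omega
        rw [e1]
        simp only [ht1, ht2, ht3]
        match j with
        | 0 =>
          simp only [reduceIte, add_zero, Nat.sub_zero]
          rw [← add_smul]
          congr 1
          have hp : (a+b+2).choose (a+1) = (a+b+1).choose a + (a+b+1).choose (a+1) := by
            rw [show a+b+2 = (a+b+1)+1 by omega]
            exact Nat.choose_succ_succ _ _
          rw [hp]
          simp only [Nat.choose_zero_right]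
          push_cast
          ring
        | (i+1) =>
          have hi : i ≤ a := by omega
          simp only [Nat.succ_ne_zero, if_false, Nat.add_sub_cancel]
          rw [← add_smul, ← add_smul]
          congr 1
          have e2 : a+b+2-(i+1) = a+b+1-i := by omega
          have e3 : a+b+1-(i+1) = a+b-i := by omega
          rw [e2, e3]
          have hc := congrArg (Nat.cast : ℕ → F) (rb_choose_pascal_aux a b i hi)
          push_cast at hc
          linear_combination (-(lam^(i+1))) * hc
  intro k l
  exact key (k+l) k l rfl
end

section
/- Let A be a (not necessarily associative or unital) algebra over a field F and let R be a Rota–Baxter operator of weight λ on A. Then for every k ≥ 1, the kernel of R^k absorbs multiplication by the image of (R + λ·id)^k on both sides: for all x ∈ ker(R^k) and all y ∈ A, both x · ((R + λ·id)^k (y)) and ((R + λ·id)^k (y)) · x lie in ker(R^k). (For λ = 0 this says ker(R^k) is a module over Im(R^k); for λ ≠ 0 it says ker(R^k) is an ideal of Im((R + λ·id)^k).) -/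
/-- For a (not necessarily associative or unital) algebra `A` over a field
`F` and a Rota–Baxter operator `R` of weight `lam`, for every `k ≥ 1` the kernel of `R^k`
absorbs multiplication by the image of `(R + lam • id)^k` on both sides. -/
theorem rb_kernel_absorbs_image
    {F : Type*} [Field F]
    {A : Type*} [NonUnitalNonAssocRing A] [Module F A] [SMulCommClass F A A]
    [IsScalarTower F A A]
    (lam : F) (R : A →ₗ[F] A)
    (hR : ∀ x y : A, R x * R y = R (R x * y + x * R y + lam • (x * y))) :
    ∀ k : ℕ, 1 ≤ k → ∀ x : A, (R ^ k) x = 0 → ∀ y : A,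
      (R ^ k) (x * (((R + lam • LinearMap.id) ^ k : A →ₗ[F] A) y)) = 0 ∧
      (R ^ k) ((((R + lam • LinearMap.id) ^ k : A →ₗ[F] A) y) * x) = 0 := by
  set S : A →ₗ[F] A := R + lam • LinearMap.id with hSdef
  -- R commutes with S pointwise
  have hcomm1 : ∀ w : A, R (S w) = S (R w) := by
    intro w
    simp [hSdef, map_add, map_smul]
  -- R commutes with S^n pointwise
  have hRS : ∀ n : ℕ, ∀ z : A, R ((S ^ n) z) = (S ^ n) (R z) := by
    intro n
    induction n with
    | zero => intro z; simp
    | succ n ihn =>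
      intro z
      rw [pow_succ' S n, Module.End.mul_apply, Module.End.mul_apply, hcomm1, ihn]
  -- R^k commutes with R pointwise
  have hRRk : ∀ n : ℕ, ∀ z : A, (R ^ n) (R z) = R ((R ^ n) z) := by
    intro n z
    rw [← Module.End.mul_apply, ← pow_succ, pow_succ', Module.End.mul_apply]
  -- key rearrangements of the Rota–Baxter identity
  have h1 : ∀ a b : A, R (a * S b) = R a * R b - R (R a * b) := by
    intro a b
    have e : R a * b + a * S b = R a * b + a * R b + lam • (a * b) := by
      simp [hSdef, mul_add, mul_smul_comm, add_assoc]
    have h : R (R a * b) + R (a * S b) = R a * R b := by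
      rw [← map_add, e, ← hR a b]
    rw [add_comm] at h
    exact eq_sub_of_add_eq h
  have h2 : ∀ a b : A, R (S a * b) = R a * R b - R (a * R b) := by
    intro a b
    have e : S a * b + a * R b = R a * b + a * R b + lam • (a * b) := by
      simp [hSdef, add_mul, smul_mul_assoc]
      abel
    have h : R (S a * b) + R (a * R b) = R a * R b := by
      rw [← map_add, e, ← hR a b]
    exact eq_sub_of_add_eq h
  have key : ∀ k : ℕ, ∀ x : A, (R ^ k) x = 0 → ∀ y : A,
      (R ^ k) (x * ((S ^ k) y)) = 0 ∧ (R ^ k) (((S ^ k) y) * x) = 0 := by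
    intro k
    induction k with
    | zero =>
      intro x hx y
      simp only [pow_zero, Module.End.one_apply] at hx ⊢
      subst hx
      simp
    | succ k ih =>
      intro x hx y
      have hx' : (R ^ k) (R x) = 0 := by
        rw [← Module.End.mul_apply, ← pow_succ]; exact hx
      constructor
      · have step : (R ^ (k + 1)) (x * (S ^ (k + 1)) y)
            = (R ^ k) (R (x * S ((S ^ k) y))) := by
          rw [pow_succ R k, pow_succ' S k, Module.End.mul_apply, Module.End.mul_apply]
        rw [step, h1 x ((S ^ k) y), map_sub, hRS k y, (ih (R x) hx' (R y)).1,
          hRRk k (R x * (S ^ k) y), (ih (R x) hx' y).1, map_zero, sub_zero]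
      · have step : (R ^ (k + 1)) ((S ^ (k + 1)) y * x)
            = (R ^ k) (R (S ((S ^ k) y) * x)) := by
          rw [pow_succ R k, pow_succ' S k, Module.End.mul_apply, Module.End.mul_apply]
        rw [step, h2 ((S ^ k) y) x, map_sub, hRS k y, (ih (R x) hx' (R y)).2,
          hRRk k ((S ^ k) y * R x)]
        have : (R ^ k) ((S ^ k) y * R x) = 0 := (ih (R x) hx' y).2
        rw [this, map_zero, sub_zero]
  intro k _ x hx y
  exact key k x hx y
end

section
/- Let A be a unital associative algebra over a field F and let R be a Rota–Baxter operator of weight −1 on A. Set a = R(1) and, for natural numbers r, s, let H_{r,s}(x) = (x−r)(x−r+1)⋯x(x+1)⋯(x+s−1) = Π_{k=0}^{r+s−1}(x − r + k) (a product of r+s linear factors; H_{r,s} = 1 when r+s = 0). Then for all r, s ≥ 0: (r+s+1)·R(H_{r,s}(a)) = H_{r,s+1}(a), where H_{r,s}(a) denotes evaluation of the polynomial H_{r,s} at a. -/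
/-- The polynomial `H_{r,s}(x) = (x−r)(x−r+1)⋯x(x+1)⋯(x+s−1) = Π_{k=0}^{r+s−1} (x−r+k)`. -/
noncomputable def Hpoly (F : Type*) [Field F] (r s : ℕ) : Polynomial F :=
  ∏ k ∈ Finset.range (r + s), (Polynomial.X - (r : Polynomial F) + (k : Polynomial F))

open Polynomial

section RBaux

variable {F : Type*} [Field F] {A : Type*} [Ring A] [Algebra F A]

lemma Hpoly_succ_right (r s : ℕ) :
    Hpoly F r (s + 1) = Hpoly F r s * (X + (s : Polynomial F)) := by
  rw [Hpoly, Hpoly, Nat.add_succ, Finset.prod_range_succ]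
  congr 1
  push_cast
  ring

lemma Hpoly_succ_left (r s : ℕ) :
    Hpoly F (r + 1) s = (X - ((r : Polynomial F) + 1)) * Hpoly F r s := by
  rw [Hpoly, Hpoly, Nat.succ_add, Finset.prod_range_succ']
  have h1 : ∀ k ∈ Finset.range (r + s),
      (X - ((r + 1 : ℕ) : Polynomial F) + ((k + 1 : ℕ) : Polynomial F))
        = (X - (r : Polynomial F) + (k : Polynomial F)) := by
    intro k _
    push_cast
    ring
  rw [Finset.prod_congr rfl h1]
  push_cast
  ring

lemma Hpoly_flip0 (r : ℕ) :
    aeval (1 - X : Polynomial F) (Hpoly F r 0) = C ((-1 : F) ^ r) * Hpoly F 0 r := by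
  induction r with
  | zero => simp [Hpoly]
  | succ r ih =>
    rw [Hpoly_succ_left, map_mul, ih,
      show Hpoly F 0 (r + 1) = Hpoly F 0 r * (X + (r : Polynomial F)) from
        Hpoly_succ_right 0 r]
    simp only [map_sub, map_add, aeval_X, map_one, map_natCast, pow_succ, C_mul, C_neg, C_1]
    ring

lemma Hpoly_flip (r s : ℕ) :
    aeval (1 - X : Polynomial F) (Hpoly F r s) = C ((-1 : F) ^ (r + s)) * Hpoly F s r := by
  induction s with
  | zero => simpa using Hpoly_flip0 (F := F) r
  | succ s ih =>
    rw [Hpoly_succ_right, map_mul, ih, Hpoly_succ_left]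
    have h2 : aeval (1 - X : Polynomial F) (X + (s : Polynomial F))
        = 1 - X + (s : Polynomial F) := by
      simp
    have h3 : C ((-1 : F) ^ (r + (s + 1))) = C ((-1 : F) ^ (r + s)) * (-1 : Polynomial F) := by
      rw [show r + (s + 1) = (r + s) + 1 from rfl, pow_succ, map_mul]
      simp
    rw [h2, h3]
    ring

lemma aeval_flip (a : A) (p : Polynomial F) :
    aeval (1 - a) p = aeval a (aeval (1 - X : Polynomial F) p) := by
  have h : (aeval (1 - a) : Polynomial F →ₐ[F] A)
      = (aeval a).comp (aeval (1 - X : Polynomial F)) := by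
    apply Polynomial.algHom_ext
    simp
  rw [h]
  rfl

lemma aeval_comm_left (a : A) (p : Polynomial F) :
    a * aeval a p = aeval a p * a := by
  calc a * aeval a p = aeval a (X * p) := by rw [map_mul, aeval_X]
    _ = aeval a (p * X) := by rw [mul_comm]
    _ = aeval a p * a := by rw [map_mul, aeval_X]

lemma natCast_mul_eq_smul (k : ℕ) (u : A) : (k : A) * u = ((k : F)) • u := by
  rw [← map_natCast (algebraMap F A) k, ← Algebra.smul_def]

lemma mul_natCast_eq_smul (k : ℕ) (u : A) : u * (k : A) = ((k : F)) • u := by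
  rw [← map_natCast (algebraMap F A) k, ← Algebra.commutes, ← Algebra.smul_def]

lemma rb_sub (R : A →ₗ[F] A)
    (hR : ∀ x y : A, R x * R y = R (R x * y + x * R y + (-1 : F) • (x * y)))
    (x y : A) :
    (x - R x) * (y - R y)
      = ((x - R x) * y + x * (y - R y) + (-1 : F) • (x * y))
        - R ((x - R x) * y + x * (y - R y) + (-1 : F) • (x * y)) := by
  have hZ : (x - R x) * y + x * (y - R y) + (-1 : F) • (x * y)
      = -(R x * y + x * R y + (-1 : F) • (x * y)) := by
    simp only [neg_one_smul]
    noncomm_ring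
  rw [hZ, map_neg, ← hR x y]
  simp only [neg_one_smul]
  noncomm_ring

lemma rb_main (n : ℕ) : ∀ (R : A →ₗ[F] A),
    (∀ x y : A, R x * R y = R (R x * y + x * R y + (-1 : F) • (x * y))) →
    ∀ r s : ℕ, r + s = n →
      ((n + 1 : ℕ) : F) • R (aeval (R (1 : A)) (Hpoly F r s))
        = aeval (R (1 : A)) (Hpoly F r (s + 1)) := by
  induction n with
  | zero =>
    intro R hR r s hrs
    obtain ⟨hr, hs⟩ : r = 0 ∧ s = 0 := by omega
    subst hr hs
    simp [Hpoly]
  | succ n ih =>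
    intro R hR r s hrs
    set m : F := ((n + 1 : ℕ) : F) with hm
    have hcast : ((n + 1 + 1 : ℕ) : F) = m + 1 := by push_cast [hm]; ring
    rcases s with _ | s'
    · -- s = 0, r = n + 1 : use the operator 1 - R
      have hr : r = n + 1 := by omega
      subst hr
      set u : A := aeval (R (1 : A)) (Hpoly F n 0) with hu
      set v : A := aeval (R (1 : A)) (Hpoly F (n + 1) 0) with hv
      set R' : A →ₗ[F] A := LinearMap.id - R with hR'def
      have hR' : ∀ x y : A, R' x * R' y = R' (R' x * y + x * R' y + (-1 : F) • (x * y)) := by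
        intro x y
        simp only [hR'def, LinearMap.sub_apply, LinearMap.id_apply]
        exact rb_sub R hR x y
      have h0 := ih R' hR' 0 n (Nat.zero_add n)
      have hR'1 : R' (1 : A) = 1 - R 1 := by
        simp [hR'def]
      rw [hR'1] at h0
      have hf1 : aeval (1 - R (1 : A)) (Hpoly F 0 n) = ((-1 : F) ^ n) • u := by
        rw [aeval_flip, Hpoly_flip, Nat.zero_add, map_mul, aeval_C, ← Algebra.smul_def, hu]
      have hf2 : aeval (1 - R (1 : A)) (Hpoly F 0 (n + 1)) = ((-1 : F) ^ (n + 1)) • v := by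
        rw [aeval_flip, Hpoly_flip, Nat.zero_add, map_mul, aeval_C, ← Algebra.smul_def, hv]
      rw [hf1, hf2, map_smul, smul_smul] at h0
      have h0' := congrArg (fun z : A => ((-1 : F) ^ n) • z) h0
      simp only [smul_smul] at h0'
      have hε : ((-1 : F) ^ n) * ((-1 : F) ^ n) = 1 := by
        rw [← pow_add]
        exact Even.neg_one_pow ⟨n, rfl⟩
      have e1 : ((-1 : F) ^ n) * (m * ((-1 : F) ^ n)) = m := by
        rw [show ((-1 : F) ^ n) * (m * ((-1 : F) ^ n))
          = m * (((-1 : F) ^ n) * ((-1 : F) ^ n)) from by ring, hε, mul_one]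
      have e2 : ((-1 : F) ^ n) * ((-1 : F) ^ (n + 1)) = -1 := by
        rw [pow_succ, ← mul_assoc, hε, one_mul]
      rw [e1, e2] at h0'
      simp only [hR'def, LinearMap.sub_apply, LinearMap.id_apply, neg_one_smul] at h0'
      -- h0' : m • (u - R u) = -v
      have h1 : m • R u = v + m • u := by
        linear_combination (norm := module) -h0'
      have hx : aeval (R (1 : A)) (X - ((n : Polynomial F) + 1)) = R 1 - (((n + 1 : ℕ) : A)) := by
        simp only [map_sub, map_add, aeval_X, aeval_natCast, aeval_one]
        push_cast
        ring
      have huv : u * R (1 : A) = v + m • u := by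
        have hv2 : v = u * R (1 : A) - m • u := by
          rw [hv, Hpoly_succ_left, map_mul, hx, sub_mul, aeval_comm_left, ← hu,
            natCast_mul_eq_smul (F := F) (n + 1) u, hm]
        rw [hv2]
        abel
      have hE : R u * R (1 : A) = R (R u) + R (u * R (1 : A)) - R u := by
        have h := hR u 1
        simp only [mul_one, one_mul, neg_one_smul, map_add, map_neg] at h
        rw [h]
        abel
      have hmul : m • (R u * R (1 : A)) = v * R (1 : A) + m • (u * R (1 : A)) := by
        rw [← smul_mul_assoc, h1, add_mul, smul_mul_assoc]
      have hRua : R (u * R (1 : A)) = R v + m • R u := by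
        rw [huv, map_add, map_smul]
      have hRRu : m • R (R u) = R v + (v + m • u) := by
        rw [← map_smul, h1, map_add, map_smul, h1]
      -- goal
      have hx0 : aeval (R (1 : A)) (X + ((0 : ℕ) : Polynomial F)) = R 1 := by
        simp
      rw [hcast, Hpoly_succ_right, map_mul, hx0, ← hv]
      -- goal : (m + 1) • R v = v * R 1
      linear_combination (norm := module)
        hmul - m • hE + m • huv - hRRu - m • hRua + (1 - m) • h1
    · -- s = s' + 1
      have hn : r + s' = n := by omega
      have h1 := ih R hR r s' hn
      set u : A := aeval (R (1 : A)) (Hpoly F r s') with hu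
      set v : A := aeval (R (1 : A)) (Hpoly F r (s' + 1)) with hv
      -- h1 : m • R u = v
      set c : F := ((s' : ℕ) : F) with hc
      have hxs : aeval (R (1 : A)) (X + ((s' : ℕ) : Polynomial F)) = R 1 + ((s' : ℕ) : A) := by
        simp
      have huv : u * R (1 : A) = v - c • u := by
        have hv2 : v = u * R (1 : A) + c • u := by
          rw [hv, Hpoly_succ_right, map_mul, hxs, ← hu, mul_add,
            mul_natCast_eq_smul (F := F) s' u, hc]
        rw [hv2]
        abel
      have hE : R u * R (1 : A) = R (R u) + R (u * R (1 : A)) - R u := by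
        have h := hR u 1
        simp only [mul_one, one_mul, neg_one_smul, map_add, map_neg] at h
        rw [h]
        abel
      have hmul : m • (R u * R (1 : A)) = v * R (1 : A) := by
        rw [← smul_mul_assoc, h1]
      have hRua : R (u * R (1 : A)) = R v - c • R u := by
        rw [huv, map_sub, map_smul]
      have hRRu : m • R (R u) = R v := by
        rw [← map_smul, h1]
      have hxs1 : aeval (R (1 : A)) (X + ((s' + 1 : ℕ) : Polynomial F))
          = R 1 + ((s' + 1 : ℕ) : A) := by
        simp
      have hscast : ((s' + 1 : ℕ) : F) = c + 1 := by push_cast [hc]; ring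
      rw [hcast, Hpoly_succ_right, map_mul, hxs1, ← hv, mul_add,
        mul_natCast_eq_smul (F := F) (s' + 1) v, hscast]
      -- goal : (m + 1) • R v = v * R 1 + (c + 1) • v
      linear_combination (norm := module)
        hmul - m • hE - hRRu - m • hRua + (c + 1) • h1

end RBaux

/-- For a unital associative algebra `A` over a field `F` and a Rota–Baxter
operator `R` of weight `−1` on `A` with `a = R(1)`, one has
`(r+s+1) · R(H_{r,s}(a)) = H_{r,s+1}(a)` for all `r, s ≥ 0`. -/
theorem rb_H_recursion
    {F : Type*} [Field F] {A : Type*} [Ring A] [Algebra F A]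
    (R : A →ₗ[F] A)
    (hR : ∀ x y : A, R x * R y = R (R x * y + x * R y + (-1 : F) • (x * y))) :
    ∀ r s : ℕ,
      ((r + s + 1 : ℕ) : F) • R (Polynomial.aeval (R (1 : A)) (Hpoly F r s))
        = Polynomial.aeval (R (1 : A)) (Hpoly F r (s + 1)) := by
  intro r s
  exact rb_main (r + s) R hR r s rfl
end

section
/- Let A be a unital associative algebra over a field F of positive characteristic p and let R be a Rota–Baxter operator of weight −1 on A. Set a = R(1). Then H_{0,p}(a) = a·(a+1)·(a+2)⋯(a+p−1) = 0. -/
/-- For a unital associative algebra `A` over a field `F` of positive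
characteristic `p` and a Rota–Baxter operator `R` of weight `−1` with `a = R(1)`, one has
`H_{0,p}(a) = a(a+1)⋯(a+p−1) = 0`. -/
theorem rb_H_zero_p_vanishes_pos_char
    {F : Type*} [Field F] (p : ℕ) [CharP F p] (hp : 0 < p)
    {A : Type*} [Ring A] [Algebra F A]
    (R : A →ₗ[F] A)
    (hR : ∀ x y : A, R x * R y = R (R x * y + x * R y + (-1 : F) • (x * y))) :
    Polynomial.aeval (R (1 : A)) (Hpoly F 0 p) = 0 := by
  set a := R (1 : A) with ha
  set P : ℕ → A := fun n =>
    Polynomial.aeval a (∏ k ∈ Finset.range n, (Polynomial.X + (k : Polynomial F))) with hP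
  have hPsucc : ∀ n : ℕ, P (n + 1) = P n * (a + (n : A)) := by
    intro n
    simp [hP, Finset.prod_range_succ, map_mul]
  have key : ∀ n : ℕ, P (n + 1) = R ((n + 1) • P n) := by
    intro n
    induction n with
    | zero => simp [hPsucc, hP, ha]
    | succ n ih =>
      set c : A := (n + 1) • P n with hc
      have hRc : R c = P (n + 1) := ih.symm
      have h1 : P (n + 1) * a = R (P (n + 1) + c * a - c) := by
        have := hR c 1
        rw [hRc] at this
        simpa [neg_smul, one_smul, sub_eq_add_neg] using this
      have h2 : P (n + 1) * ((n + 1 : ℕ) : A) = (n + 1) • R c := by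
        rw [hRc, ← (Nat.cast_commute (n + 1) (P (n + 1))).eq, ← nsmul_eq_mul]
      have hcn : c * (n : A) = n • c := by
        rw [← (Nat.cast_commute n c).eq, ← nsmul_eq_mul]
      have hca : c * (a + (n : A)) = (n + 1) • P (n + 1) := by
        rw [hc, smul_mul_assoc, ← hPsucc]
      have h4 : P (n + 1) + c * a - c + (n + 1) • c = (n + 2) • P (n + 1) := by
        have step1 : P (n + 1) + c * a - c + (n + 1) • c
            = P (n + 1) + c * (a + (n : A)) := by
          rw [succ_nsmul, mul_add, hcn]
          abel
        rw [step1, hca, succ_nsmul (P (n + 1)) (n + 1), add_comm]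
      calc P (n + 1 + 1) = P (n + 1) * a + (n + 1) • R c := by
            rw [hPsucc (n + 1), mul_add, h2]
        _ = R (P (n + 1) + c * a - c) + R ((n + 1) • c) := by rw [h1, map_nsmul R (n + 1) c]
        _ = R (P (n + 1) + c * a - c + (n + 1) • c) := (map_add R _ _).symm
        _ = R ((n + 2) • P (n + 1)) := by rw [h4]
  obtain ⟨q, rfl⟩ : ∃ q, p = q + 1 := ⟨p - 1, (Nat.succ_pred_eq_of_pos hp).symm⟩
  have hHp : Polynomial.aeval a (Hpoly F 0 (q + 1)) = P (q + 1) := by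
    simp [Hpoly, hP]
  have hz : (q + 1) • P q = (0 : A) := by
    rw [← Nat.cast_smul_eq_nsmul F, CharP.cast_eq_zero, zero_smul]
  rw [hHp, key q, hz, map_zero]
end

section
/- Let A be a unital associative algebra over a field F that decomposes as a vector space as A = F·1 ⊕ N, where N is a non-unital subalgebra all of whose elements are nilpotent. Then every Rota–Baxter operator R of nonzero weight λ on A is splitting and satisfies R(1) = 0 or R(1) = −λ·1; that is: R ∘ (R + λ·id) = 0, the subspaces ker(R) and ker(R + λ·id) are each closed under multiplication, A = ker(R) ⊕ ker(R + λ·id), and either R(1) = 0 or R(1) = −λ·1. -/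
section RB12aux

variable {F : Type*} [Field F] {A : Type*} [Ring A] [Algebra F A]

/-- Every element of `A` is a scalar multiple of 1 plus an element of `N`. -/
private lemma rb12_decomp (N : NonUnitalSubalgebra F A)
    (hcompl : IsCompl (Submodule.span F {(1 : A)}) N.toSubmodule) (a : A) :
    ∃ c : F, a - c • (1 : A) ∈ N := by
  have ha : a ∈ Submodule.span F {(1 : A)} ⊔ N.toSubmodule := by
    rw [hcompl.sup_eq_top]; trivial
  rcases Submodule.mem_sup.mp ha with ⟨y, hy, z, hz, hyz⟩
  rcases Submodule.mem_span_singleton.mp hy with ⟨c, rfl⟩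
  exact ⟨c, by rw [← hyz]; simpa using hz⟩

/-- `N` is a left ideal. -/
private lemma rb12_mul_left (N : NonUnitalSubalgebra F A)
    (hcompl : IsCompl (Submodule.span F {(1 : A)}) N.toSubmodule) (a : A) {n : A}
    (hn : n ∈ N) : a * n ∈ N := by
  obtain ⟨c, hc⟩ := rb12_decomp N hcompl a
  have h : a * n = (a - c • (1 : A)) * n + c • n := by
    rw [sub_mul, smul_mul_assoc, one_mul]; abel
  rw [h]
  exact add_mem (mul_mem hc hn) (SMulMemClass.smul_mem c hn)

/-- `N` is a right ideal. -/
private lemma rb12_mul_right (N : NonUnitalSubalgebra F A)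
    (hcompl : IsCompl (Submodule.span F {(1 : A)}) N.toSubmodule) (a : A) {n : A}
    (hn : n ∈ N) : n * a ∈ N := by
  obtain ⟨c, hc⟩ := rb12_decomp N hcompl a
  have h : n * a = n * (a - c • (1 : A)) + c • n := by
    rw [mul_sub, mul_smul_comm, mul_one]; abel
  rw [h]
  exact add_mem (mul_mem hn hc) (SMulMemClass.smul_mem c hn)

/-- An element `c•1 + n` with `c ≠ 0` and `n` nilpotent has a two-sided inverse which is a
polynomial in it (lies in the span of its powers). -/
private lemma rb12_unit_in_powers (c : F) (hc : c ≠ 0) (w n : A) (hn : IsNilpotent n)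
    (hw : w = c • (1 : A) + n) :
    ∃ g ∈ Submodule.span F (Set.range fun k : ℕ => w ^ k), g * w = 1 ∧ w * g = 1 := by
  obtain ⟨p, hp⟩ := hn
  set ν : A := c⁻¹ • n with hν
  have hνp : ν ^ p = 0 := by rw [hν, smul_pow, hp, smul_zero]
  have hνw : ν = c⁻¹ • w - 1 := by
    rw [hν, hw, smul_add, smul_smul, inv_mul_cancel₀ hc, one_smul]; abel
  have hone : (1 : A) + ν = c⁻¹ • w := by rw [hνw]; abel
  set g₀ : A := ∑ j ∈ Finset.range p, (-ν) ^ j with hg₀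
  have hnegp : (-ν) ^ p = 0 := by
    rw [neg_pow, hνp, mul_zero]
  have h1 : g₀ * ((1 : A) + ν) = 1 := by
    have h := geom_sum_mul (-ν) p
    rw [hnegp, zero_sub, ← hg₀] at h
    calc g₀ * ((1 : A) + ν) = -(g₀ * (-ν - 1)) := by
          rw [show (-ν - 1 : A) = -((1 : A) + ν) from by abel, mul_neg, neg_neg]
    _ = 1 := by rw [h, neg_neg]
  have h2 : ((1 : A) + ν) * g₀ = 1 := by
    have h := mul_geom_sum (-ν) p
    rw [hnegp, zero_sub, ← hg₀] at h
    calc ((1 : A) + ν) * g₀ = -((-ν - 1) * g₀) := by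
          rw [show (-ν - 1 : A) = -((1 : A) + ν) from by abel, neg_mul, neg_neg]
    _ = 1 := by rw [h, neg_neg]
  -- membership of g₀ in span of powers of w
  set Pw := Submodule.span F (Set.range fun k : ℕ => w ^ k) with hPw
  have hwpow : ∀ k : ℕ, w ^ k ∈ Pw := fun k =>
    Submodule.subset_span ⟨k, rfl⟩
  have hmulw : ∀ b ∈ Pw, w * b ∈ Pw := by
    intro b hb
    induction hb using Submodule.span_induction with
    | mem x hx => obtain ⟨k, rfl⟩ := hx; simpa [← pow_succ'] using hwpow (k + 1)
    | zero => simpa using Pw.zero_mem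
    | add x y hx hy ihx ihy => simpa [mul_add] using Pw.add_mem ihx ihy
    | smul a x hx ihx => simpa [mul_smul_comm] using Pw.smul_mem a ihx
  have hmulν : ∀ b ∈ Pw, ν * b ∈ Pw := by
    intro b hb
    have : ν * b = c⁻¹ • (w * b) - b := by rw [hνw, sub_mul, smul_mul_assoc, one_mul]
    rw [this]
    exact sub_mem (Pw.smul_mem _ (hmulw b hb)) hb
  have hnegν : ∀ j : ℕ, (-ν) ^ j ∈ Pw := by
    intro j
    induction j with
    | zero => simpa using hwpow 0
    | succ k ih =>
        have : (-ν) ^ (k + 1) = -(ν * (-ν) ^ k) := by rw [pow_succ', neg_mul]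
        rw [this]
        exact neg_mem (hmulν _ ih)
  have hg₀mem : g₀ ∈ Pw := by
    rw [hg₀]
    exact Submodule.sum_mem _ fun j _ => hnegν j
  refine ⟨c⁻¹ • g₀, Pw.smul_mem _ hg₀mem, ?_, ?_⟩
  · calc (c⁻¹ • g₀) * w = g₀ * (c⁻¹ • w) := by rw [smul_mul_assoc, mul_smul_comm]
    _ = g₀ * ((1 : A) + ν) := by rw [← hone]
    _ = 1 := h1
  · calc w * (c⁻¹ • g₀) = (c⁻¹ • w) * g₀ := by rw [mul_smul_comm, smul_mul_assoc]
    _ = ((1 : A) + ν) * g₀ := by rw [← hone]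
    _ = 1 := h2

/-- The kernel of a Rota–Baxter operator of nonzero weight is multiplicatively closed. -/
private lemma rb12_ker_mul {lam : F} (hlam : lam ≠ 0) {R : A →ₗ[F] A}
    (hR : ∀ x y : A, R x * R y = R (R x * y + x * R y + lam • (x * y)))
    {a b : A} (ha : R a = 0) (hb : R b = 0) : R (a * b) = 0 := by
  have h := hR a b
  rw [ha, hb] at h
  simp only [zero_mul, mul_zero, zero_add, add_zero, map_smul] at h
  rcases smul_eq_zero.mp h.symm with h' | h'
  · exact absurd h' hlam
  · exact h'

/-- Main Lemma 1 : a Rota–Baxter operator of nonzero weight preserves `N`. -/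
private lemma rb12_RN (N : NonUnitalSubalgebra F A)
    (hnil : ∀ x ∈ N, IsNilpotent x)
    (hcompl : IsCompl (Submodule.span F {(1 : A)}) N.toSubmodule)
    (h1 : (1 : A) ≠ 0)
    {lam : F} (hlam : lam ≠ 0) (R : A →ₗ[F] A)
    (hR : ∀ x y : A, R x * R y = R (R x * y + x * R y + lam • (x * y))) :
    ∀ x ∈ N, R x ∈ N := by
  intro x hx
  by_contra hRxN
  obtain ⟨c, hc⟩ := rb12_decomp N hcompl (R x)
  have hc0 : c ≠ 0 := by
    intro h
    apply hRxN
    simpa [h] using hc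
  -- the sequence zₖ with R zₖ = (R x)^(k+1)
  set z : ℕ → A := fun k =>
    Nat.rec x (fun _ zk => R zk * x + zk * R x + lam • (zk * x)) k with hz
  have hz0 : z 0 = x := rfl
  have hzs : ∀ k, z (k + 1) = R (z k) * x + z k * R x + lam • (z k * x) := fun k => rfl
  have hzN : ∀ k, z k ∈ N := by
    intro k
    induction k with
    | zero => exact hx
    | succ k ih =>
        rw [hzs]
        exact add_mem (add_mem (rb12_mul_left N hcompl _ hx)
          (rb12_mul_right N hcompl _ ih))
          (SMulMemClass.smul_mem _ (rb12_mul_left N hcompl _ hx))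
  have hzR : ∀ k, R (z k) = (R x) ^ (k + 1) := by
    intro k
    induction k with
    | zero => rw [hz0, pow_one]
    | succ k ih =>
        rw [hzs, ← hR (z k) x, ih, ← pow_succ]
  -- 1 lies in R(N)
  have hpowmem : ∀ k : ℕ, (R x) ^ (k + 1) ∈ Submodule.map R N.toSubmodule := by
    intro k
    exact Submodule.mem_map.mpr ⟨z k, hzN k, hzR k⟩
  obtain ⟨g, hg, hgw, -⟩ :=
    rb12_unit_in_powers c hc0 (R x) (R x - c • (1 : A)) (hnil _ hc) (by abel)
  have honemem : (1 : A) ∈ Submodule.map R N.toSubmodule := by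
    rw [← hgw]
    clear hgw
    induction hg using Submodule.span_induction with
    | mem a ha =>
        obtain ⟨k, rfl⟩ := ha
        show R x ^ k * R x ∈ Submodule.map R N.toSubmodule
        rw [← pow_succ]
        exact hpowmem k
    | zero => simpa using (Submodule.map R N.toSubmodule).zero_mem
    | add a b ha hb iha ihb =>
        simpa [add_mul] using (Submodule.map R N.toSubmodule).add_mem iha ihb
    | smul a b hb ihb =>
        simpa [smul_mul_assoc] using (Submodule.map R N.toSubmodule).smul_mem a ihb
  obtain ⟨w, hwN, hw1⟩ := Submodule.mem_map.mp honemem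
  obtain ⟨m, hm⟩ := hnil w hwN
  have hm0 : m ≠ 0 := by
    intro h
    rw [h, pow_zero] at hm
    exact h1 hm
  -- R (w^(k+1)) = (-lam⁻¹)^k • 1
  have hwk : ∀ k : ℕ, R (w ^ (k + 1)) = ((-lam⁻¹) ^ k) • (1 : A) := by
    intro k
    induction k with
    | zero => rw [pow_one, hw1, pow_zero, one_smul]
    | succ k ih =>
        have e := hR (w ^ (k + 1)) w
        rw [hw1, mul_one, mul_one, ih] at e
        rw [smul_mul_assoc, one_mul, ← pow_succ, map_add, map_add, map_smul, map_smul,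
          hw1, ih] at e
        -- e : (-lam⁻¹)^k • 1 = (-lam⁻¹)^k • 1 + (-lam⁻¹)^k • 1 + lam • R (w^(k+2))
        have e2 : ((-lam⁻¹) ^ k) • (1 : A) + lam • R (w ^ (k + 1 + 1)) = 0 := by
          have := e.symm
          rw [add_assoc] at this
          have h3 := (add_eq_left).mp this
          exact h3
        have e3 : lam • R (w ^ (k + 1 + 1)) = -(((-lam⁻¹) ^ k) • (1 : A)) :=
          eq_neg_of_add_eq_zero_right e2
        have e4 : R (w ^ (k + 1 + 1)) = lam⁻¹ • (-(((-lam⁻¹) ^ k) • (1 : A))) := by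
          rw [← e3, smul_smul, inv_mul_cancel₀ hlam, one_smul]
        rw [e4, smul_neg, smul_smul, ← neg_smul, pow_succ']
        congr 1
        ring
  obtain ⟨j, rfl⟩ := Nat.exists_eq_succ_of_ne_zero hm0
  have : ((-lam⁻¹) ^ j) • (1 : A) = 0 := by
    rw [← hwk j, hm, map_zero]
  rcases smul_eq_zero.mp this with h' | h'
  · exact pow_ne_zero j (neg_ne_zero.mpr (inv_ne_zero hlam)) h'
  · exact h1 h'

/-- Main Lemma 2 : if the image of `R` is contained in `N`, then `R ∘ (R + lam) = 0`. -/
private lemma rb12_keyB (N : NonUnitalSubalgebra F A)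
    (hnil : ∀ x ∈ N, IsNilpotent x)
    (hcompl : IsCompl (Submodule.span F {(1 : A)}) N.toSubmodule)
    (h1 : (1 : A) ≠ 0)
    {lam : F} (hlam : lam ≠ 0) (R : A →ₗ[F] A)
    (hR : ∀ x y : A, R x * R y = R (R x * y + x * R y + lam • (x * y)))
    (hImR : ∀ x : A, R x ∈ N) :
    ∀ y : A, R (R y + lam • y) = 0 := by
  obtain ⟨m, hm⟩ := hnil _ (hImR 1)
  have hm0 : m ≠ 0 := by
    intro h
    rw [h, pow_zero] at hm
    exact h1 hm
  obtain ⟨j, rfl⟩ := Nat.exists_eq_succ_of_ne_zero hm0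
  -- the sequence ωₖ with R ωₖ = (R 1)^(k+1), ωₖ ≡ lam^k • 1 mod N
  set ω : ℕ → A := fun k =>
    Nat.rec (1 : A) (fun _ wk => R wk + wk * R 1 + lam • wk) k with hω
  have hω0 : ω 0 = 1 := rfl
  have hωs : ∀ k, ω (k + 1) = R (ω k) + ω k * R 1 + lam • ω k := fun k => rfl
  have hωR : ∀ k, R (ω k) = (R 1) ^ (k + 1) := by
    intro k
    induction k with
    | zero => rw [hω0, pow_one]
    | succ k ih =>
        have e := hR (ω k) 1
        rw [mul_one, mul_one] at e
        rw [hωs, ← e, ih, ← pow_succ]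
  have hωN : ∀ k, ω k - (lam ^ k) • (1 : A) ∈ N := by
    intro k
    induction k with
    | zero => simpa [hω0] using N.zero_mem'
    | succ k ih =>
        have heq : ω (k + 1) - (lam ^ (k + 1)) • (1 : A) =
            R (ω k) + ω k * R 1 + lam • (ω k - (lam ^ k) • (1 : A)) := by
          rw [hωs, smul_sub, smul_smul, ← pow_succ']
          abel
        rw [heq]
        exact add_mem (add_mem (hImR _) (rb12_mul_left N hcompl _ (hImR 1)))
          (SMulMemClass.smul_mem _ ih)
  set w : A := ω j with hwdef
  have hw0 : R w = 0 := by rw [hwdef, hωR j, hm]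
  obtain ⟨g, hg, hgw, -⟩ :=
    rb12_unit_in_powers (lam ^ j) (pow_ne_zero j hlam) w (w - (lam ^ j) • (1 : A))
      (hnil _ (hωN j)) (by abel)
  -- powers of w are in ker R
  have hpow0 : ∀ k : ℕ, R (w ^ (k + 1)) = 0 := by
    intro k
    induction k with
    | zero => rw [pow_one]; exact hw0
    | succ k ih =>
        rw [pow_succ]
        exact rb12_ker_mul hlam hR ih hw0
  intro y
  set v : A := R y + lam • y with hv
  have hwv : R (w * v) = 0 := by
    have h := hR w y
    rw [hw0, zero_mul, zero_mul, zero_add] at h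
    have harg : w * R y + lam • (w * y) = w * v := by
      rw [hv, mul_add, mul_smul_comm]
    rw [harg] at h
    exact h.symm
  have hall : ∀ a ∈ Submodule.span F (Set.range fun k : ℕ => w ^ k),
      R (a * (w * v)) = 0 := by
    intro a ha
    induction ha using Submodule.span_induction with
    | mem a ha =>
        obtain ⟨k, rfl⟩ := ha
        cases k with
        | zero =>
            show R (w ^ 0 * (w * v)) = 0
            rw [pow_zero, one_mul]; exact hwv
        | succ k =>
            show R (w ^ (k + 1) * (w * v)) = 0
            exact rb12_ker_mul hlam hR (hpow0 k) hwv
    | zero => rw [zero_mul, map_zero]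
    | add a b ha hb iha ihb => rw [add_mul, map_add, iha, ihb, add_zero]
    | smul c a ha iha => rw [smul_mul_assoc, map_smul, iha, smul_zero]
  have hvv : v = g * (w * v) := by
    rw [← mul_assoc, hgw, one_mul]
  show R v = 0
  rw [hvv]
  exact hall g hg

/-- Main Lemma 3 : if the image of `R` is contained in `N`, then `R 1 = 0`. -/
private lemma rb12_R1 (N : NonUnitalSubalgebra F A)
    (hnil : ∀ x ∈ N, IsNilpotent x)
    (hcompl : IsCompl (Submodule.span F {(1 : A)}) N.toSubmodule)
    (h1 : (1 : A) ≠ 0)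
    {lam : F} (hlam : lam ≠ 0) (R : A →ₗ[F] A)
    (hR : ∀ x y : A, R x * R y = R (R x * y + x * R y + lam • (x * y)))
    (hImR : ∀ x : A, R x ∈ N) :
    R 1 = 0 := by
  have hS := rb12_keyB N hnil hcompl h1 hlam R hR hImR
  have hRr : R (R 1) = -(lam • R 1) := by
    have := hS 1
    rw [map_add, map_smul] at this
    exact eq_neg_of_add_eq_zero_left this
  have hr2 : R 1 * R 1 + lam • R 1 = 0 := by
    have e := hR 1 1
    rw [mul_one, one_mul, one_mul, map_add, map_add, map_smul, hRr] at e
    rw [e]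
    abel
  have hrw : R 1 * (R 1 + lam • (1 : A)) = 0 := by
    rw [mul_add, mul_smul_comm, mul_one, hr2]
  obtain ⟨g, -, -, hwg⟩ :=
    rb12_unit_in_powers lam hlam (R 1 + lam • (1 : A)) (R 1) (hnil _ (hImR 1))
      (by abel)
  calc R 1 = R 1 * ((R 1 + lam • (1 : A)) * g) := by rw [hwg, mul_one]
  _ = (R 1 * (R 1 + lam • (1 : A))) * g := by rw [mul_assoc]
  _ = 0 := by rw [hrw, zero_mul]

end RB12aux

/-- If a unital associative algebra `A` over a field `F` decomposes as a
vector space as `A = F·1 ⊕ N` with `N` a non-unital subalgebra consisting of nilpotent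
elements, then every Rota–Baxter operator `R` of nonzero weight `lam` on `A` is splitting
and (up to the symmetry) `R(1) = 0`: one has `R ∘ (R + lam•id) = 0`, `ker R` and
`ker (R + lam•id)` are multiplicatively closed, `A = ker R ⊕ ker (R + lam•id)`, and
`R(1) = 0` or `R(1) = −lam·1`. -/
theorem rb_on_local_nil_algebra_splitting
    {F : Type*} [Field F] {A : Type*} [Ring A] [Algebra F A]
    (N : NonUnitalSubalgebra F A)
    (hnil : ∀ x ∈ N, IsNilpotent x)
    (hcompl : IsCompl (Submodule.span F {(1 : A)}) N.toSubmodule)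
    (lam : F) (hlam : lam ≠ 0) (R : A →ₗ[F] A)
    (hR : ∀ x y : A, R x * R y = R (R x * y + x * R y + lam • (x * y))) :
    R * (R + lam • LinearMap.id) = 0 ∧
    (∀ x y : A, x ∈ LinearMap.ker R → y ∈ LinearMap.ker R → x * y ∈ LinearMap.ker R) ∧
    (∀ x y : A, x ∈ LinearMap.ker (R + lam • LinearMap.id) →
      y ∈ LinearMap.ker (R + lam • LinearMap.id) →
      x * y ∈ LinearMap.ker (R + lam • LinearMap.id)) ∧
    IsCompl (LinearMap.ker R) (LinearMap.ker (R + lam • LinearMap.id)) ∧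
    (R 1 = 0 ∨ R 1 = (-lam) • (1 : A)) := by
  by_cases h1 : (1 : A) = 0
  · -- trivial algebra
    have hsub : Subsingleton A := subsingleton_of_zero_eq_one h1.symm
    refine ⟨LinearMap.ext fun x => Subsingleton.elim _ _,
      fun x y _ _ => LinearMap.mem_ker.mpr (Subsingleton.elim _ _),
      fun x y _ _ => LinearMap.mem_ker.mpr (Subsingleton.elim _ _),
      ⟨?_, ?_⟩, Or.inl (Subsingleton.elim _ _)⟩
    · rw [disjoint_iff, eq_bot_iff]
      intro x _
      exact (Submodule.mem_bot F).mpr (Subsingleton.elim x 0)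
    · rw [codisjoint_iff, eq_top_iff]
      intro x _
      have hx0 : x = (0 : A) := Subsingleton.elim _ _
      rw [hx0]
      exact Submodule.zero_mem _
  · -- nontrivial algebra
    have hRN := rb12_RN N hnil hcompl h1 hlam R hR
    -- dichotomy for the scalar part of R 1
    obtain ⟨c, hc⟩ := rb12_decomp N hcompl (R 1)
    have e : R 1 * R 1 = R (R 1) + R (R 1) + lam • R 1 := by
      have := hR 1 1
      rwa [mul_one, one_mul, one_mul, map_add, map_add, map_smul] at this
    have hRR1 : R (R 1) - (c * c) • (1 : A) ∈ N := by
      have heq : R (R 1) - (c * c) • (1 : A) =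
          c • (R 1 - c • (1 : A)) + R (R 1 - c • (1 : A)) := by
        rw [map_sub, map_smul]
        module
      rw [heq]
      exact add_mem (SMulMemClass.smul_mem c hc) (hRN _ hc)
    have hsq : R 1 * R 1 - (c * c) • (1 : A) ∈ N := by
      have heq : R 1 * R 1 - (c * c) • (1 : A) =
          (R 1 - c • (1 : A)) * R 1 + c • (R 1 - c • (1 : A)) := by
        rw [sub_mul, smul_mul_assoc, one_mul, smul_sub, smul_smul]
        abel
      rw [heq]
      exact add_mem (rb12_mul_right N hcompl _ hc) (SMulMemClass.smul_mem c hc)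
    have key : (c * c + lam * c) • (1 : A) ∈ N := by
      have heq : (c * c + lam * c) • (1 : A) =
          ((R (R 1) + R (R 1) + lam • R 1) - R 1 * R 1) +
          (R 1 * R 1 - (c * c) • (1 : A)) -
          ((R (R 1) - (c * c) • (1 : A)) + (R (R 1) - (c * c) • (1 : A))) -
          lam • (R 1 - c • (1 : A)) := by
        module
      rw [heq]
      have hzero : (R (R 1) + R (R 1) + lam • R 1) - R 1 * R 1 ∈ N := by
        rw [← e]
        simpa using N.zero_mem'
      exact sub_mem (sub_mem (add_mem hzero hsq) (add_mem hRR1 hRR1))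
        (SMulMemClass.smul_mem lam hc)
    have hcc : c * c + lam * c = 0 := by
      obtain ⟨p, hp⟩ := hnil _ key
      rcases Nat.eq_zero_or_pos p with hp0 | hp0
      · rw [hp0, pow_zero] at hp; exact absurd hp h1
      · rw [smul_pow, one_pow] at hp
        rcases smul_eq_zero.mp hp with h' | h'
        · exact pow_eq_zero_iff hp0.ne' |>.mp h'
        · exact absurd h' h1
    have hcases : c = 0 ∨ c = -lam := by
      have hfac : c * (c + lam) = 0 := by ring_nf; linear_combination hcc
      rcases mul_eq_zero.mp hfac with h' | h'
      · exact Or.inl h'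
      · exact Or.inr (eq_neg_of_add_eq_zero_left h')
    -- in both cases, obtain hS and the disjunction
    have main : (∀ y : A, R (R y + lam • y) = 0) ∧ (R 1 = 0 ∨ R 1 = (-lam) • (1 : A)) := by
      rcases hcases with h0 | hneg
      · -- R 1 ∈ N
        have hR1N : R 1 ∈ N := by simpa [h0] using hc
        have hImR : ∀ x : A, R x ∈ N := by
          intro x
          obtain ⟨d, hd⟩ := rb12_decomp N hcompl x
          have heq : R x = d • R 1 + R (x - d • (1 : A)) := by
            rw [map_sub, map_smul]; abel
          rw [heq]
          exact add_mem (SMulMemClass.smul_mem d hR1N) (hRN _ hd)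
        exact ⟨rb12_keyB N hnil hcompl h1 hlam R hR hImR,
          Or.inl (rb12_R1 N hnil hcompl h1 hlam R hR hImR)⟩
      · -- R 1 + lam • 1 ∈ N ; pass to R' = -lam•id - R
        set R' : A →ₗ[F] A := -(lam • (LinearMap.id : A →ₗ[F] A)) - R with hR'def
        have hR'app : ∀ x : A, R' x = -(lam • x) - R x := by
          intro x
          simp [hR'def]
        have hR' : ∀ x y : A, R' x * R' y = R' (R' x * y + x * R' y + lam • (x * y)) := by
          intro x y
          have harg : R' x * y + x * R' y + lam • (x * y) =
              -(R x * y + x * R y + lam • (x * y)) := by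
            rw [hR'app, hR'app, sub_mul, mul_sub, neg_mul, mul_neg,
              smul_mul_assoc, mul_smul_comm]
            abel
          rw [harg, map_neg, hR'app, hR'app, hR'app, ← hR x y]
          simp only [neg_mul, mul_neg, sub_mul, mul_sub, smul_mul_assoc, mul_smul_comm,
            smul_add, smul_smul, neg_neg, neg_sub, sub_neg_eq_add]
          module
        have hR'1N : R' 1 ∈ N := by
          have : R 1 - (-lam) • (1 : A) ∈ N := by rw [← hneg]; exact hc
          have heq : R' 1 = -(R 1 - (-lam) • (1 : A)) := by
            rw [hR'app]
            module
          rw [heq]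
          exact neg_mem this
        have hImR' : ∀ x : A, R' x ∈ N := by
          intro x
          obtain ⟨d, hd⟩ := rb12_decomp N hcompl x
          have heq : R' x = d • R' 1 + R' (x - d • (1 : A)) := by
            rw [map_sub, map_smul]; abel
          have hR'sub : R' (x - d • (1 : A)) ∈ N := by
            rw [hR'app]
            exact sub_mem (neg_mem (SMulMemClass.smul_mem lam hd)) (hRN _ hd)
          rw [heq]
          exact add_mem (SMulMemClass.smul_mem d hR'1N) hR'sub
        have hS' := rb12_keyB N hnil hcompl h1 hlam R' hR' hImR'
        have hR'1 := rb12_R1 N hnil hcompl h1 hlam R' hR' hImR'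
        constructor
        · intro y
          have h := hS' y
          have harg : R' y + lam • y = -(R y) := by rw [hR'app]; abel
          rw [harg, map_neg, neg_eq_zero, hR'app] at h
          -- h : -(lam • R y) - R (R y) = 0
          have h2 : R (R y) + lam • R y = -(-(lam • R y) - R (R y)) := by abel
          rw [map_add, map_smul, h2, h, neg_zero]
        · right
          have h := hR'1
          rw [hR'app, sub_eq_zero] at h
          rw [← h, neg_smul]
    obtain ⟨hS, hdisj⟩ := main
    refine ⟨?_, ?_, ?_, ⟨?_, ?_⟩, hdisj⟩
    · apply LinearMap.ext
      intro x
      simp only [Module.End.mul_apply, LinearMap.add_apply, LinearMap.smul_apply,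
        LinearMap.id_apply, LinearMap.zero_apply]
      exact hS x
    · intro x y hx hy
      rw [LinearMap.mem_ker] at *
      exact rb12_ker_mul hlam hR hx hy
    · intro x y hx hy
      rw [LinearMap.mem_ker, LinearMap.add_apply, LinearMap.smul_apply,
        LinearMap.id_apply] at hx hy ⊢
      have hx' : R x = -(lam • x) := eq_neg_of_add_eq_zero_left hx
      have hy' : R y = -(lam • y) := eq_neg_of_add_eq_zero_left hy
      have h := hR x y
      rw [hx', hy'] at h
      have harg : -(lam • x) * y + x * -(lam • y) + lam • (x * y) =
          -(lam • (x * y)) := by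
        rw [neg_mul, mul_neg, smul_mul_assoc, mul_smul_comm]
        abel
      rw [harg, map_neg, map_smul, neg_mul, mul_neg, neg_neg, smul_mul_assoc,
        mul_smul_comm, smul_smul] at h
      have h2 : lam • (R (x * y) + lam • (x * y)) = 0 := by
        rw [smul_add, smul_smul, h]
        abel
      rcases smul_eq_zero.mp h2 with h' | h'
      · exact absurd h' hlam
      · exact h'
    · rw [Submodule.disjoint_def]
      intro x hx hx'
      rw [LinearMap.mem_ker] at hx
      rw [LinearMap.mem_ker, LinearMap.add_apply, LinearMap.smul_apply,
        LinearMap.id_apply, hx, zero_add] at hx'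
      rcases smul_eq_zero.mp hx' with h' | h'
      · exact absurd h' hlam
      · exact h'
    · rw [codisjoint_iff, eq_top_iff]
      intro x _
      have hmem1 : lam⁻¹ • (R x + lam • x) ∈ LinearMap.ker R := by
        rw [LinearMap.mem_ker, map_smul, hS x, smul_zero]
      have hmem2 : (-lam⁻¹) • R x ∈ LinearMap.ker (R + lam • LinearMap.id) := by
        rw [LinearMap.mem_ker, map_smul]
        have : (R + lam • (LinearMap.id : A →ₗ[F] A)) (R x) = 0 := by
          rw [LinearMap.add_apply, LinearMap.smul_apply, LinearMap.id_apply]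
          have := hS x
          rw [map_add, map_smul] at this
          exact this
        rw [this, smul_zero]
      have hsum : x = lam⁻¹ • (R x + lam • x) + (-lam⁻¹) • R x := by
        rw [smul_add, smul_smul, inv_mul_cancel₀ hlam, one_smul, neg_smul]
        abel
      rw [hsum]
      exact Submodule.add_mem_sup hmem1 hmem2
end

section
/- Let F be an algebraically closed field of characteristic zero, let A be a unital finite-dimensional associative F-algebra, and let λ ∈ F be nonzero. Suppose the capacity of A is at most n, i.e., every finite family of pairwise orthogonal nonzero idempotents of A (elements e_i with e_i² = e_i ≠ 0 and e_i·e_j = 0 for i ≠ j) has at most n members. Then for every Rota–Baxter operator R of weight λ on A there exists k with 0 ≤ k ≤ 2n such that R^k ∘ (R + λ·id)^{2n−k} = 0; in particular rb_λ(A) ≤ 2n. -/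
/-!
Let `L` be left multiplication by `R 1`. The Rota–Baxter identity at `x = 1` says
`[L, R] = R (R + λ)`, hence `[L, p(R)] = p'(R) R (R + λ)` for every polynomial `p`; for the
minimal polynomial of `R` this forces every eigenvalue of `R` to be `0` or `-λ`.

Both `T = R` and `T = R + λ` satisfy `[L, T] = T (T + c)` with `c = ±λ ≠ 0`. If
`T^(m+1) x = 0 ≠ T^m x`, then on `ker T^(m+1)` the operator `v = T (T + c)⁻¹` satisfies
`L v = v (L + c)` and `v^m ≠ 0`, so `L` has the eigenvalues `μ, μ + c, …, μ + m c`. These are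
`m + 1` distinct roots of the minimal polynomial of `R 1`, and by the Chinese remainder theorem
distinct roots of a minimal polynomial yield as many orthogonal nonzero idempotents, so
`m + 1 ≤ n`. Thus `ker T^k ⊆ ker T^n` for all `k`, and `R^n (R + λ)^n` vanishes on every
generalized eigenspace of `R`.
-/

open Polynomial Module Set

section

variable {F : Type*} [Field F] {E : Type*} [Ring E] [Algebra F E]

namespace Polynomial

theorem isRoot_of_dvd_derivative_mul [CharZero F] {p q : F[X]} (hp : p ≠ 0)
    (hq : q ≠ 0) (hdvd : p ∣ derivative p * q) {β : F} (hβ : p.IsRoot β) : q.IsRoot β := by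
  have hp' : derivative p ≠ 0 := fun h ↦ by
    rw [eq_C_of_natDegree_eq_zero (derivative_eq_zero.mp h)] at hp hβ
    simp_all
  have hmul : derivative p * q ≠ 0 := mul_ne_zero hp' hq
  have hle : p.rootMultiplicity β ≤ (derivative p * q).rootMultiplicity β :=
    (le_rootMultiplicity_iff hmul).mpr ((p.pow_rootMultiplicity_dvd β).trans hdvd)
  rw [rootMultiplicity_mul hmul, derivative_rootMultiplicity_of_root hβ] at hle
  have hpos : 0 < p.rootMultiplicity β := (rootMultiplicity_pos hp).mpr hβ
  exact (rootMultiplicity_pos hq).mp (by omega)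

/-- `e` is the idempotent of the Chinese remainder theorem for `p = q * (p / q)`, where
`q = (X - C β) ^ p.rootMultiplicity β`: `e ≡ 1 [q]` and `e ≡ 0 [p / q]`. -/
theorem exists_dvd_mul_and_dvd_sub_one {p : F[X]} (hp : p ≠ 0) (β : F) :
    ∃ e : F[X], p ∣ (X - C β) ^ p.rootMultiplicity β * e ∧
      (X - C β) ^ p.rootMultiplicity β ∣ e - 1 := by
  obtain ⟨f, hpf, hndvd⟩ := p.exists_eq_pow_rootMultiplicity_mul_and_not_dvd hp β
  obtain ⟨u, w, huw⟩ := (irreducible_X_sub_C β).coprime_pow_of_not_dvd _ hndvd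
  have hpu : (X - C β) ^ p.rootMultiplicity β * (u * f) = p * u := by
    conv_rhs => rw [hpf]
    ring
  exact ⟨u * f, Dvd.intro u hpu.symm, ⟨-w, by linear_combination huw⟩⟩

theorem mul_aeval_eq_of_mul_eq {l r : E} {q : F[X]} (h : l * r = r * l + aeval r q)
    (f : F[X]) : l * aeval r f = aeval r f * l + aeval r (derivative f * q) := by
  induction f using Polynomial.induction_on with
  | C a => simp [Algebra.commutes]
  | add f g hf hg =>
    simp only [map_add, add_mul, mul_add, hf, hg]
    abel
  | monomial n a ih =>
    rw [pow_succ, ← mul_assoc]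
    generalize C a * X ^ n = p at ih ⊢
    have hcomm : aeval r q * r = r * aeval r q := by
      simpa using congrArg (aeval r) (mul_comm q X)
    simp only [derivative_mul, derivative_X, mul_one, add_mul, map_add, map_mul, aeval_X]
    rw [← mul_assoc, ih, add_mul, mul_assoc _ l, h, map_mul, mul_assoc _ _ r, hcomm]
    noncomm_ring

end Polynomial

theorem mul_mul_inv_eq_of_mul_eq {l t : E} {c : F} {u : Eˣ}
    (hu : (u : E) = t + c • 1) (h : l * t = t * l + t * u) :
    l * (t * ↑u⁻¹) = t * ↑u⁻¹ * (l + c • 1) := by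
  have hlu : l * u = u * (l + t) := by
    rw [hu, mul_add, h, mul_smul_comm, mul_one, hu]
    simp only [mul_add, add_mul, smul_mul_assoc, one_mul, mul_smul_comm, mul_one]
    abel
  have hinv : ↑u⁻¹ * l = (l + t) * ↑u⁻¹ := by
    calc ↑u⁻¹ * l = ↑u⁻¹ * (l * u) * ↑u⁻¹ := by simp [mul_assoc]
      _ = (l + t) * ↑u⁻¹ := by rw [hlu, ← mul_assoc, Units.inv_mul, one_mul]
  calc l * (t * ↑u⁻¹) = t * ((l + t + c • 1) * ↑u⁻¹) := by
        rw [← mul_assoc, h, ← mul_add, mul_assoc, hu, add_assoc]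
    _ = t * (↑u⁻¹ * (l + c • 1)) := by
        rw [mul_add (↑u⁻¹ : E), hinv, mul_smul_comm, mul_one, add_mul (l + t), smul_mul_assoc,
          one_mul]
    _ = t * ↑u⁻¹ * (l + c • 1) := (mul_assoc _ _ _).symm

theorem mul_add_smul_one_eq {l t : E} {c : F}
    (h : l * t = t * l + t * (t + c • 1)) :
    l * (t + c • 1) = (t + c • 1) * l + (t + c • 1) * (t + c • 1 + (-c) • 1) := by
  rw [mul_add, h, neg_smul, add_neg_cancel_right]
  simp only [add_mul, mul_add, smul_mul_assoc, mul_smul_comm, one_mul, mul_one]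
  abel

namespace Module.End

variable {W : Type*} [AddCommGroup W] [Module F W]

theorem mapsTo_maxGenEigenspace_of_mul_eq {l v : End F W} {c : F} (h : l * v = v * (l + c • 1))
    (μ : F) : MapsTo v (l.maxGenEigenspace μ) (l.maxGenEigenspace (μ + c)) := by
  have hsemi : SemiconjBy v (l - μ • 1) (l - (μ + c) • 1) := by
    rw [SemiconjBy, mul_sub, sub_mul, h]
    simp only [mul_add, add_mul, add_smul, mul_smul_comm, smul_mul_assoc, mul_one, one_mul]
    abel
  rintro x hx
  obtain ⟨k, hk⟩ := (mem_maxGenEigenspace _ _ _).mp hx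
  refine (mem_maxGenEigenspace _ _ _).mpr ⟨k, ?_⟩
  rw [← mul_apply, ← (hsemi.pow_right k).eq, mul_apply, hk, map_zero]

theorem hasEigenvalue_of_mem_maxGenEigenspace {f : End F W} {μ : F} {x : W}
    (hx : x ∈ f.maxGenEigenspace μ) (hx0 : x ≠ 0) : f.HasEigenvalue μ :=
  (hasUnifEigenvalue_iff_hasUnifEigenvalue_one (by simp)).mp
    ((Submodule.ne_bot_iff _).mpr ⟨x, hx, hx0⟩)

theorem hasEigenvalue_of_hasEigenvalue_restrict {f : End F W} {p : Submodule F W}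
    (hp : ∀ x ∈ p, f x ∈ p) {μ : F} (hμ : HasEigenvalue (f.restrict hp) μ) :
    f.HasEigenvalue μ := by
  obtain ⟨x, hx⟩ := hμ.exists_hasEigenvector
  exact hasEigenvalue_of_hasEigenvector ⟨mem_eigenspace_iff.mpr
    (congrArg Subtype.val hx.apply_eq_smul), fun h0 ↦ hx.2 (Subtype.ext h0)⟩

theorem mapsTo_ker_aeval_of_dvd {l t : End F W} {q p : F[X]} (h : l * t = t * l + aeval t q)
    (hp : p ∣ derivative p * q) :
    MapsTo l (LinearMap.ker (aeval t p)) (LinearMap.ker (aeval t p)) := by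
  intro x hx
  obtain ⟨s, hs⟩ := hp
  have hlx := LinearMap.congr_fun (mul_aeval_eq_of_mul_eq h p) x
  rw [SetLike.mem_coe, LinearMap.mem_ker] at hx ⊢
  rw [hs, mul_comm p, map_mul, LinearMap.add_apply, mul_apply, mul_apply, mul_apply, hx,
    map_zero, map_zero, add_zero] at hlx
  exact hlx.symm

theorem eq_zero_or_eq_neg_of_hasEigenvalue [CharZero F] [FiniteDimensional F W]
    {l t : End F W} {c : F}
    (h : l * t = t * l + t * (t + c • 1)) {μ : F} (hμ : t.HasEigenvalue μ) :
    μ = 0 ∨ μ = -c := by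
  have h' : l * t = t * l + aeval t (X * (X + C c)) := by
    simpa [Algebra.algebraMap_eq_smul_one] using h
  have hzero := mul_aeval_eq_of_mul_eq h' (minpoly F t)
  rw [minpoly.aeval, mul_zero, zero_mul, zero_add] at hzero
  have hroot := isRoot_of_dvd_derivative_mul (minpoly.ne_zero (Algebra.IsIntegral.isIntegral t))
    (mul_ne_zero X_ne_zero (X_add_C_ne_zero c)) (minpoly.dvd F t hzero.symm)
    (hasEigenvalue_iff_isRoot.mp hμ)
  simpa [eq_neg_iff_add_eq_zero] using hroot

variable [IsAlgClosed F] [FiniteDimensional F W]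

theorem exists_hasEigenvalue_add_mul_of_mul_eq {l v : End F W} {c : F}
    (h : l * v = v * (l + c • 1)) {m : ℕ} (hv : v ^ m ≠ 0) :
    ∃ μ : F, ∀ j ≤ m, l.HasEigenvalue (μ + j * c) := by
  obtain ⟨μ, x, hx, hvx⟩ : ∃ μ, ∃ x ∈ l.maxGenEigenspace μ, (v ^ m) x ≠ 0 := by
    by_contra! hcon
    refine hv (LinearMap.ker_eq_top.mp (eq_top_iff.mpr ?_))
    rw [← l.iSup_maxGenEigenspace_eq_top]
    exact iSup_le fun μ x hx ↦ hcon μ x hx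
  have hmem : ∀ j : ℕ, (v ^ j) x ∈ l.maxGenEigenspace (μ + j * c) := by
    intro j
    induction j with
    | zero => simpa using hx
    | succ j ih =>
      rw [pow_succ', mul_apply, Nat.cast_succ, add_one_mul, ← add_assoc]
      exact mapsTo_maxGenEigenspace_of_mul_eq h _ ih
  refine ⟨μ, fun j hj ↦ hasEigenvalue_of_mem_maxGenEigenspace (hmem j) fun h0 ↦ hvx ?_⟩
  rw [← Nat.sub_add_cancel hj, pow_add, mul_apply, h0, map_zero]

theorem exists_hasEigenvalue_add_mul_of_isNilpotent {l t : End F W} {c : F} (hc : c ≠ 0)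
    (h : l * t = t * l + t * (t + c • 1)) (ht : IsNilpotent t) {m : ℕ} (htm : t ^ m ≠ 0) :
    ∃ μ : F, ∀ j ≤ m, l.HasEigenvalue (μ + j * c) := by
  have hu := ht.isUnit_add_right_of_commute (hc.isUnit.map (algebraMap F (End F W)) :
    IsUnit (c • 1 : End F W)) ((Commute.one_right t).smul_right c)
  have hv : l * (t * ↑hu.unit⁻¹) = t * ↑hu.unit⁻¹ * (l + c • 1) :=
    mul_mul_inv_eq_of_mul_eq hu.unit_spec (by rw [hu.unit_spec]; exact h)
  refine exists_hasEigenvalue_add_mul_of_mul_eq hv fun h0 ↦ htm ?_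
  have htu : Commute t ↑hu.unit⁻¹ := Commute.units_inv_right <| by
    rw [hu.unit_spec]
    exact (Commute.refl t).add_right ((Commute.one_right t).smul_right c)
  rw [htu.mul_pow, ← Units.val_pow_eq_pow_val] at h0
  exact (Units.mul_left_eq_zero _).mp h0

theorem exists_hasEigenvalue_add_mul_of_pow_apply {l t : End F W} {c : F} (hc : c ≠ 0)
    (h : l * t = t * l + t * (t + c • 1)) {m : ℕ} {x : W} (hx : (t ^ (m + 1)) x = 0)
    (hx' : (t ^ m) x ≠ 0) :
    ∃ μ : F, ∀ j ≤ m, l.HasEigenvalue (μ + j * c) := by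
  set p := LinearMap.ker (t ^ (m + 1))
  have ht : ∀ y ∈ p, t y ∈ p := fun y hy ↦ by
    rw [LinearMap.mem_ker, ← mul_apply, ← pow_succ, pow_succ', mul_apply, hy, map_zero]
  have hl : ∀ y ∈ p, l y ∈ p := by
    have hdvd : (X ^ (m + 1) : F[X]) ∣ derivative (X ^ (m + 1)) * (X * (X + C c)) :=
      ⟨C ((m + 1 : ℕ) : F) * (X + C c), by rw [derivative_X_pow]; simp; ring⟩
    have h' : l * t = t * l + aeval t (X * (X + C c)) := by
      simpa [Algebra.algebraMap_eq_smul_one] using h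
    have hker := mapsTo_ker_aeval_of_dvd h' hdvd
    rw [map_pow, aeval_X] at hker
    exact fun y hy ↦ hker hy
  have hxp : x ∈ p := hx
  obtain ⟨μ, hμ⟩ := exists_hasEigenvalue_add_mul_of_isNilpotent (l := l.restrict hl)
    (t := t.restrict ht) hc
    (LinearMap.ext fun y ↦ Subtype.ext (by simpa using LinearMap.congr_fun h y))
    ⟨m + 1, LinearMap.ext fun y ↦ by
      rw [pow_restrict]; exact Subtype.ext y.2⟩
    (m := m) fun h0 ↦ hx' (by
      rw [pow_restrict] at h0
      exact congrArg Subtype.val (LinearMap.congr_fun h0 ⟨x, hxp⟩))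
  exact ⟨μ, fun j hj ↦ hasEigenvalue_of_hasEigenvalue_restrict hl (hμ j hj)⟩

theorem pow_mul_pow_eq_zero_of_hasEigenvalue {f : End F W} {a b : F} {n : ℕ}
    (hspec : ∀ μ, f.HasEigenvalue μ → μ = a ∨ μ = b)
    (ha : ∀ k, LinearMap.ker ((f - a • 1) ^ k) ≤ LinearMap.ker ((f - a • 1) ^ n))
    (hb : ∀ k, LinearMap.ker ((f - b • 1) ^ k) ≤ LinearMap.ker ((f - b • 1) ^ n)) :
    (f - a • 1) ^ n * (f - b • 1) ^ n = 0 := by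
  have hcomm : Commute (f - a • 1) (f - b • 1) := by
    have h := (Commute.all (X - C a : F[X]) (X - C b)).map (aeval f)
    rwa [map_sub, map_sub, aeval_X, aeval_C, aeval_C, Algebra.algebraMap_eq_smul_one,
      Algebra.algebraMap_eq_smul_one] at h
  refine LinearMap.ker_eq_top.mp (eq_top_iff.mpr ?_)
  rw [← f.iSup_maxGenEigenspace_eq_top]
  refine iSup_le fun μ x hx ↦ ?_
  rcases eq_or_ne x 0 with rfl | hx0
  · exact zero_mem _
  obtain ⟨k, hk⟩ := (mem_maxGenEigenspace _ _ _).mp hx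
  rw [LinearMap.mem_ker]
  rcases hspec μ (hasEigenvalue_of_mem_maxGenEigenspace hx hx0) with rfl | rfl
  · rw [(hcomm.pow_pow n n).eq, mul_apply, ha k hk, map_zero]
  · rw [mul_apply, hb k hk, map_zero]

end Module.End

def HasCapacityAtMost (A : Type*) [Ring A] (n : ℕ) : Prop :=
  ∀ (m : ℕ) (e : Fin m → A), (∀ i, e i * e i = e i) → (∀ i, e i ≠ 0) →
    (∀ i j, i ≠ j → e i * e j = 0) → m ≤ n

namespace HasCapacityAtMost

variable {A : Type*} [Ring A] {n : ℕ}

theorem card_le (hA : HasCapacityAtMost A n) {ι : Type*} [Fintype ι] (e : ι → A)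
    (hidem : ∀ i, e i * e i = e i) (hne : ∀ i, e i ≠ 0)
    (horth : ∀ i j, i ≠ j → e i * e j = 0) :
    Fintype.card ι ≤ n := by
  let σ := Fintype.equivFin ι
  exact hA _ (e ∘ σ.symm) (fun i ↦ hidem _) (fun i ↦ hne _)
    fun i j hij ↦ horth _ _ (σ.symm.injective.ne hij)

variable [Algebra F A] [FiniteDimensional F A]

theorem card_roots_minpoly_le [DecidableEq F] (hA : HasCapacityAtMost A n) (r : A) :
    (minpoly F r).roots.toFinset.card ≤ n := by
  set g := minpoly F r
  have hg : g ≠ 0 := minpoly.ne_zero (Algebra.IsIntegral.isIntegral r)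
  have hzero : ∀ p : F[X], g ∣ p → aeval r p = 0 := fun p ⟨d, hd⟩ ↦ by
    rw [hd, map_mul, minpoly.aeval, zero_mul]
  choose e hge he1 using exists_dvd_mul_and_dvd_sub_one hg
  rw [← Fintype.card_coe]
  refine hA.card_le (fun β ↦ aeval r (e β)) (fun β ↦ ?_) (fun β ↦ ?_)
    fun β γ hβγ ↦ ?_
  · obtain ⟨d, hd⟩ := he1 β
    rw [← sub_eq_zero, ← map_mul, ← map_sub, hzero]
    exact (hge β).trans ⟨d, by rw [← mul_sub_one, hd]; ring⟩
  · intro h0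
    have hroot : g.IsRoot β := isRoot_of_mem_roots (Multiset.mem_toFinset.mp β.2)
    have hβ : X - C (β : F) ∣ (X - C (β : F)) ^ g.rootMultiplicity (β : F) :=
      dvd_pow_self _ ((rootMultiplicity_pos hg).mpr hroot).ne'
    have hβe : X - C (β : F) ∣ e β := (dvd_iff_isRoot.mpr hroot).trans (minpoly.dvd F r h0)
    have h1 := dvd_sub hβe (hβ.trans (he1 β))
    rw [sub_sub_cancel] at h1
    exact not_isUnit_X_sub_C _ (isUnit_of_dvd_one h1)
  · have hcop : IsCoprime ((X - C (γ : F)) ^ g.rootMultiplicity (γ : F))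
        ((X - C (β : F)) ^ g.rootMultiplicity (β : F)) :=
      (isCoprime_X_sub_C_of_isUnit_sub
        (sub_ne_zero.mpr fun h ↦ hβγ (Subtype.ext h.symm)).isUnit).pow
    have hγβ : (X - C (γ : F)) ^ g.rootMultiplicity (γ : F) ∣ e β :=
      hcop.dvd_of_dvd_mul_left ((g.pow_rootMultiplicity_dvd γ).trans (hge β))
    rw [← map_mul, hzero]
    exact (hge γ).trans (mul_comm (e β) (e γ) ▸ mul_dvd_mul_right hγβ (e γ))

end HasCapacityAtMost

section RotaBaxter

variable {A : Type*} [Ring A] [Algebra F A] [FiniteDimensional F A]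

theorem isRoot_minpoly_of_hasEigenvalue_mulLeft {r : A} {μ : F}
    (hμ : Module.End.HasEigenvalue (LinearMap.mulLeft F r) μ) : (minpoly F r).IsRoot μ := by
  rw [← minpoly.algHom_eq (Algebra.lmul F A) Algebra.lmul_injective r]
  exact Module.End.hasEigenvalue_iff_isRoot.mp hμ

variable [IsAlgClosed F] [CharZero F]

theorem succ_le_card_roots_minpoly_of_pow_apply [DecidableEq F] {r : A} {t : End F A} {c : F}
    (hc : c ≠ 0) (h : LinearMap.mulLeft F r * t = t * LinearMap.mulLeft F r + t * (t + c • 1))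
    {m : ℕ} {x : A} (hx : (t ^ (m + 1)) x = 0) (hx' : (t ^ m) x ≠ 0) :
    m + 1 ≤ (minpoly F r).roots.toFinset.card := by
  obtain ⟨μ, hμ⟩ := Module.End.exists_hasEigenvalue_add_mul_of_pow_apply hc h hx hx'
  have hr : minpoly F r ≠ 0 := minpoly.ne_zero (Algebra.IsIntegral.isIntegral r)
  have hmem : ∀ j ∈ Finset.range (m + 1), μ + j * c ∈ (minpoly F r).roots.toFinset :=
    fun j hj ↦ Multiset.mem_toFinset.mpr <| (mem_roots hr).mpr
      (isRoot_minpoly_of_hasEigenvalue_mulLeft (hμ j (Finset.mem_range_succ_iff.mp hj)))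
  have hinj : InjOn (fun j : ℕ ↦ μ + j * c) (Finset.range (m + 1)) :=
    fun i _ j _ hij ↦ by simpa [hc] using hij
  simpa using Finset.card_le_card_of_injOn _ hmem hinj

theorem HasCapacityAtMost.ker_pow_le_ker_pow {n : ℕ} (hA : HasCapacityAtMost A n) {r : A}
    {t : End F A} {c : F} (hc : c ≠ 0)
    (h : LinearMap.mulLeft F r * t = t * LinearMap.mulLeft F r + t * (t + c • 1)) (k : ℕ) :
    LinearMap.ker (t ^ k) ≤ LinearMap.ker (t ^ n) := by
  classical
  induction k with
  | zero => rw [pow_zero, Module.End.one_eq_id, LinearMap.ker_id]; exact bot_le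
  | succ m ih =>
    intro x hx
    by_cases hxm : (t ^ m) x = 0
    · exact ih hxm
    have hmn : m + 1 ≤ n :=
      (succ_le_card_roots_minpoly_of_pow_apply hc h hx hxm).trans (hA.card_roots_minpoly_le r)
    rw [LinearMap.mem_ker, ← Nat.sub_add_cancel hmn, pow_add, Module.End.mul_apply, hx, map_zero]

end RotaBaxter

end

/-- Over an algebraically closed field `F` of characteristic zero, if a
unital finite-dimensional associative `F`-algebra `A` has capacity at most `n` (every
family of pairwise orthogonal nonzero idempotents has at most `n` members), then every
Rota–Baxter operator of nonzero weight `lam` on `A` satisfies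
`R^k ∘ (R + lam•id)^(2n−k) = 0` for some `k ≤ 2n`; in particular `rb_lam(A) ≤ 2n`. -/
theorem rb_index_le_twice_capacity
    {F : Type*} [Field F] [IsAlgClosed F] [CharZero F]
    {A : Type*} [Ring A] [Algebra F A] [FiniteDimensional F A]
    (lam : F) (hlam : lam ≠ 0) (n : ℕ)
    (hcap : ∀ (m : ℕ) (e : Fin m → A),
      (∀ i, e i * e i = e i) → (∀ i, e i ≠ 0) →
      (∀ i j, i ≠ j → e i * e j = 0) → m ≤ n) :
    ∀ R : A →ₗ[F] A,
      (∀ x y : A, R x * R y = R (R x * y + x * R y + lam • (x * y))) →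
      ∃ k ≤ 2 * n, R ^ k * (R + lam • LinearMap.id) ^ (2 * n - k) = 0 := by
  intro R hR
  set L := LinearMap.mulLeft F (R 1)
  have hLR : L * R = R * L + R * (R + lam • 1) := by
    ext y
    simp [L, hR 1 y, mul_add, add_assoc]
  have hspec (μ : F) (hμ : Module.End.HasEigenvalue R μ) : μ = 0 ∨ μ = -lam :=
    Module.End.eq_zero_or_eq_neg_of_hasEigenvalue hLR hμ
  have h0 := HasCapacityAtMost.ker_pow_le_ker_pow hcap hlam hLR
  have h1 := HasCapacityAtMost.ker_pow_le_ker_pow hcap (neg_ne_zero.mpr hlam)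
    (mul_add_smul_one_eq hLR)
  have hsub0 : R - (0 : F) • 1 = R := by rw [zero_smul, sub_zero]
  have hsub1 : R - (-lam) • 1 = R + lam • 1 := by module
  have hzero := Module.End.pow_mul_pow_eq_zero_of_hasEigenvalue (f := R) (a := 0) (b := -lam)
    (n := n) hspec (by rwa [hsub0]) (by rwa [hsub1])
  rw [hsub0, hsub1, Module.End.one_eq_id] at hzero
  refine ⟨n, by omega, ?_⟩
  rwa [two_mul, Nat.add_sub_cancel]
end

section
/- Let F be a field of characteristic zero, let A be a unital finite-dimensional (not necessarily associative) F-algebra, and let R be a Rota–Baxter operator of weight 0 on A. Define the derived products by x∘₀y = xy and x∘_{i+1}y = R(x)∘_i y + x∘_i R(y). Then x∘_k y = Σ_{i=0}^{k} C(k,i) · R^i(x)·R^{k−i}(y) for all k, and there exists a natural number N such that for every k ≥ N and all x, y ∈ A, Σ_{i=0}^{k} C(k,i) · R^i(x)·R^{k−i}(y) = 0; that is, the limiting derived algebra A_∞ has trivial (zero) product. -/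
/-!
Putting `x = 1` in the Rota–Baxter identity gives `R² = L R - R L` with `L` the left
multiplication by `R 1`, so `tr (R ^ (n + 2)) = tr (R ^ n L R) - tr (R ^ (n + 1) L) = 0` by
cyclicity of the trace. Over an algebraically closed field, `tr (f ^ n)` is the sum of `μ ^ n`
weighted by the dimensions of the generalized eigenspaces; in characteristic zero these weights are
nonzero, and power sums vanishing for all large `n` force every eigenvalue to be `0`. Extending
scalars to an algebraic closure, `R` is nilpotent, say `R ^ N = 0`, and then every term
`R^i(x) R^{k-i}(y)` with `k ≥ 2N` vanishes.
-/

open LinearMap Module Polynomial Finset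

/-- The derived products `x∘₀y = xy`, `x∘_{i+1}y = R(x)∘_i y + x∘_i R(y)` associated with
an operator `R` of weight `0` on a (not necessarily associative) algebra `A`. -/
def derivedMul {F : Type*} [Field F] {A : Type*} [NonAssocRing A] [Module F A]
    (R : A →ₗ[F] A) : ℕ → A → A → A
  | 0, x, y => x * y
  | (i + 1), x, y => derivedMul R i (R x) y + derivedMul R i x (R y)

theorem derivedMul_eq_sum {F : Type*} [Field F] {A : Type*} [NonAssocRing A] [Module F A]
    (R : A →ₗ[F] A) (k : ℕ) (x y : A) :
    derivedMul R k x y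
      = ∑ i ∈ range (k + 1), (k.choose i : F) • ((R ^ i) x * (R ^ (k - i)) y) := by
  simp_rw [Nat.cast_smul_eq_nsmul]
  induction k generalizing x y with
  | zero => simp [derivedMul]
  | succ k ih =>
    rw [sum_choose_succ_nsmul (fun i j => (R ^ i) x * (R ^ j) y), derivedMul, ih, ih, add_comm]
    -- `congr 1` closes the `R x` summand: `(R ^ i) (R x)` is `(R ^ (i + 1)) x` by definition.
    congr 1
    refine sum_congr rfl fun i hi => ?_
    rw [show k + 1 - i = k - i + 1 by grind, pow_succ, Module.End.mul_apply]

theorem LinearMap.trace_pow_eq_mul_finrank_of_isNilpotent_sub {R M : Type*} [CommRing R]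
    [IsReduced R] [AddCommGroup M] [Module R M] [Module.Free R M] [Module.Finite R M]
    {g : Module.End R M} {μ : R} (hg : IsNilpotent (g - algebraMap R _ μ)) (n : ℕ) :
    trace R M (g ^ n) = μ ^ n * finrank R M := by
  induction n with
  | zero => simp
  | succ n ih =>
    rw [pow_succ, Module.End.mul_eq_comp,
      trace_comp_eq_mul_of_commute_of_isNilpotent μ ((Commute.refl g).pow_left n) hg, ih, pow_succ]
    ring

theorem Finset.eq_zero_of_forall_sum_pow_mul_eq_zero {K : Type*} [CommRing K] [IsDomain K]
    [DecidableEq K] {s : Finset K} {d : K → K} {k : ℕ}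
    (h : ∀ n, ∑ μ ∈ s, μ ^ (n + k) * d μ = 0) {μ₀ : K} (hμ₀ : μ₀ ∈ s) (hμ₀_ne : μ₀ ≠ 0) :
    d μ₀ = 0 := by
  set p : K[X] := ∏ ν ∈ s.erase μ₀, (X - C ν)
  have hp_ne : p.eval μ₀ ≠ 0 := by
    simp only [p, eval_prod, eval_sub, eval_X, eval_C]
    exact prod_ne_zero_iff.mpr fun ν hν => sub_ne_zero.mpr (ne_of_mem_erase hν).symm
  have hp_vanish : ∀ ν ∈ s, ν ≠ μ₀ → p.eval ν = 0 := fun ν hν hne => by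
    simp only [p, eval_prod, eval_sub, eval_X, eval_C]
    exact prod_eq_zero (mem_erase.mpr ⟨hne, hν⟩) (sub_self ν)
  -- `μ ↦ μ ^ k * p(μ)` is a combination of the powers `μ ^ (j + k)`, and it isolates `μ₀`.
  have hsum : ∑ μ ∈ s, μ ^ k * p.eval μ * d μ = 0 := by
    simp_rw [eval_eq_sum_range, mul_sum, sum_mul]
    rw [sum_comm]
    refine sum_eq_zero fun j _ => ?_
    simp_rw [show ∀ μ, μ ^ k * (p.coeff j * μ ^ j) * d μ = p.coeff j * (μ ^ (j + k) * d μ)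
      from fun μ => by ring]
    rw [← mul_sum, h, mul_zero]
  rw [sum_eq_single_of_mem μ₀ hμ₀ fun ν hν hne => by
    rw [hp_vanish ν hν hne, mul_zero, zero_mul]] at hsum
  exact (mul_eq_zero.mp hsum).resolve_left (mul_ne_zero (pow_ne_zero k hμ₀_ne) hp_ne)

section AlgClosed

variable {K V : Type*} [Field K] [AddCommGroup V] [Module K V] [FiniteDimensional K V]

theorem Module.End.maxGenEigenspace_ne_bot_iff_mem_roots (f : Module.End K V) (μ : K) :
    f.maxGenEigenspace μ ≠ ⊥ ↔ μ ∈ f.charpoly.roots := by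
  rw [Ne, ← Submodule.finrank_eq_zero, finrank_maxGenEigenspace_eq, ← Ne, ← pos_iff_ne_zero,
    rootMultiplicity_pos f.charpoly_monic.ne_zero, mem_roots f.charpoly_monic.ne_zero]

theorem LinearMap.trace_pow_eq_sum_roots_charpoly [IsAlgClosed K] [DecidableEq K]
    (f : Module.End K V) (n : ℕ) :
    trace K V (f ^ n) =
      ∑ μ ∈ f.charpoly.roots.toFinset, μ ^ n * finrank K (f.maxGenEigenspace μ) := by
  have hfin : {μ | f.maxGenEigenspace μ ≠ ⊥}.Finite :=
    WellFoundedGT.finite_ne_bot_of_iSupIndep f.independent_maxGenEigenspace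
  have hmaps (μ : K) : Set.MapsTo (f ^ n) (f.maxGenEigenspace μ) (f.maxGenEigenspace μ) :=
    f.mapsTo_maxGenEigenspace_of_comm ((Commute.refl f).pow_right n) μ
  have hfin_eq : hfin.toFinset = f.charpoly.roots.toFinset := by
    ext μ
    simp [f.maxGenEigenspace_ne_bot_iff_mem_roots]
  rw [trace_eq_sum_trace_restrict' (DirectSum.isInternal_submodule_of_iSupIndep_of_iSup_eq_top
      f.independent_maxGenEigenspace f.iSup_maxGenEigenspace_eq_top) hfin hmaps, hfin_eq]
  refine sum_congr rfl fun μ _ => ?_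
  rw [← Module.End.pow_restrict n (f.mapsTo_maxGenEigenspace_of_comm rfl μ)]
  exact trace_pow_eq_mul_finrank_of_isNilpotent_sub
    (f.isNilpotent_restrict_maxGenEigenspace_sub_algebraMap μ) n

theorem Module.End.isNilpotent_of_forall_mem_roots_charpoly_eq_zero [IsAlgClosed K]
    {f : Module.End K V} (h : ∀ μ ∈ f.charpoly.roots, μ = 0) : IsNilpotent f := by
  have hsplit := IsAlgClosed.splits f.charpoly
  rw [isNilpotent_iff_charpoly, hsplit.eq_prod_roots_of_monic f.charpoly_monic,
    Multiset.eq_replicate_card.mpr h, ← hsplit.natDegree_eq_card_roots, charpoly_natDegree]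
  simp

theorem Module.End.isNilpotent_of_trace_pow_eq_zero_of_isAlgClosed [CharZero K] [IsAlgClosed K]
    {f : Module.End K V} {k : ℕ} (h : ∀ n, trace K V (f ^ (n + k)) = 0) : IsNilpotent f := by
  classical
  refine isNilpotent_of_forall_mem_roots_charpoly_eq_zero fun μ hμ => ?_
  by_contra hμ_ne
  have hmult : (finrank K (f.maxGenEigenspace μ) : K) = 0 :=
    eq_zero_of_forall_sum_pow_mul_eq_zero
      (fun n => (trace_pow_eq_sum_roots_charpoly f (n + k)).symm.trans (h n))
      (Multiset.mem_toFinset.mpr hμ) hμ_ne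
  rw [Nat.cast_eq_zero, Submodule.finrank_eq_zero] at hmult
  exact (f.maxGenEigenspace_ne_bot_iff_mem_roots μ).mpr hμ hmult

end AlgClosed

theorem Module.End.isNilpotent_of_trace_pow_eq_zero {K V : Type*} [Field K] [CharZero K]
    [AddCommGroup V] [Module K V] [FiniteDimensional K V]
    {f : Module.End K V} {k : ℕ} (h : ∀ n, trace K V (f ^ (n + k)) = 0) : IsNilpotent f := by
  let L := AlgebraicClosure K
  have hL : IsNilpotent (f.baseChange L) :=
    isNilpotent_of_trace_pow_eq_zero_of_isAlgClosed fun n => by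
      rw [← baseChange_pow, trace_baseChange, h, map_zero]
  have hinj : Function.Injective (Module.End.baseChangeHom K L V) :=
    LinearMap.baseChangeHom_injective K V L
  exact (IsNilpotent.map_iff hinj).mp hL

theorem LinearMap.trace_pow_add_two_eq_zero_of_sq_eq_commutator {R M : Type*} [CommRing R]
    [AddCommGroup M] [Module R M] {f g : Module.End R M} (h : f ^ 2 = g * f - f * g) (n : ℕ) :
    trace R M (f ^ (n + 2)) = 0 := by
  rw [pow_add, h, mul_sub, map_sub, ← mul_assoc, ← mul_assoc, trace_mul_comm R (f ^ n * g),
    ← mul_assoc, ← pow_succ', ← pow_succ, sub_self]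

theorem rotaBaxter_sq_eq_commutator_mulLeft {F A : Type*} [Field F] [NonAssocRing A] [Module F A]
    [SMulCommClass F A A] (R : A →ₗ[F] A)
    (hR : ∀ x y : A, R x * R y = R (R x * y + x * R y)) :
    R ^ 2 = mulLeft F (R 1) * R - R * mulLeft F (R 1) := by
  ext x
  have h := hR 1 x
  rw [one_mul, map_add] at h
  simp [pow_two, h]

theorem rb_derived_algebra_weight_zero_trivial_general
    {F : Type*} [Field F] [CharZero F]
    {A : Type*} [NonAssocRing A] [Module F A] [SMulCommClass F A A]
    [FiniteDimensional F A]
    (R : A →ₗ[F] A)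
    (hR : ∀ x y : A, R x * R y = R (R x * y + x * R y)) :
    (∀ (k : ℕ) (x y : A),
      derivedMul R k x y
        = ∑ i ∈ Finset.range (k + 1),
            ((Nat.choose k i : F)) • ((R ^ i) x * (R ^ (k - i)) y)) ∧
    (∃ N : ℕ, ∀ k ≥ N, ∀ x y : A,
      ∑ i ∈ Finset.range (k + 1),
          ((Nat.choose k i : F)) • ((R ^ i) x * (R ^ (k - i)) y) = 0) := by
  refine ⟨derivedMul_eq_sum R, ?_⟩
  obtain ⟨N, hN⟩ := Module.End.isNilpotent_of_trace_pow_eq_zero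
    (trace_pow_add_two_eq_zero_of_sq_eq_commutator (rotaBaxter_sq_eq_commutator_mulLeft R hR))
  refine ⟨2 * N, fun k hk x y => sum_eq_zero fun i _ => ?_⟩
  rcases le_or_gt N i with hi | hi
  · rw [pow_eq_zero_of_le hi hN, LinearMap.zero_apply, zero_mul, smul_zero]
  · rw [pow_eq_zero_of_le (by omega : N ≤ k - i) hN, LinearMap.zero_apply, mul_zero, smul_zero]

/-- For a unital finite-dimensional (not necessarily associative) algebra
`A` over a field `F` of characteristic zero and a Rota–Baxter operator `R` of weight `0`
on `A`, the derived products satisfy `x∘_k y = Σ_{i=0}^k C(k,i) R^i(x) R^{k−i}(y)`, and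
there is `N` such that this product vanishes identically for all `k ≥ N`; that is, the
limiting derived algebra `A_∞` has trivial product. -/
theorem rb_derived_algebra_weight_zero_trivial
    {F : Type*} [Field F] [CharZero F]
    {A : Type*} [NonAssocRing A] [Module F A] [SMulCommClass F A A] [IsScalarTower F A A]
    [FiniteDimensional F A]
    (R : A →ₗ[F] A)
    (hR : ∀ x y : A, R x * R y = R (R x * y + x * R y)) :
    (∀ (k : ℕ) (x y : A),
      derivedMul R k x y
        = ∑ i ∈ Finset.range (k + 1),
            ((Nat.choose k i : F)) • ((R ^ i) x * (R ^ (k - i)) y)) ∧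
    (∃ N : ℕ, ∀ k ≥ N, ∀ x y : A,
      ∑ i ∈ Finset.range (k + 1),
          ((Nat.choose k i : F)) • ((R ^ i) x * (R ^ (k - i)) y) = 0) :=
  rb_derived_algebra_weight_zero_trivial_general R hR
end
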